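/- arXiv:2004.06908 — 6 statements merged into one kernel-verified Lean document; each statement's English description precedes it below -/
import Mathlib

section
/- Let A = diag(a_1,…,a_n) be a real diagonal matrix, let w ∈ C²(ℝ), and define u(x) = w(½ ∑_{i=1}^n a_i x_i²) for x ∈ ℝⁿ. Set s = ½ ∑_{i=1}^n a_i x_i² and a = (a_1,…,a_n). Then for every x ∈ ℝⁿ the Hessian matrix of u satisfies D²u(x) = w'(s) A + w''(s) (Ax)(Ax)ᵀ, and for every 1 ≤ k ≤ n, σ_k(λ(D²u(x))) = σ_k(a) (w'(s))^k + w''(s) (w'(s))^{k−1} ∑_{i=1}^n σ_{k−1;i}(a) (a_i x_i)². -/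
open scoped BigOperators
open Filter MeasureTheory Set

noncomputable section

/-- Euclidean `n`-space `ℝⁿ`. -/
abbrev En (n : ℕ) : Type := EuclideanSpace ℝ (Fin n)

/-- `σ_k(a)`: the `k`-th elementary symmetric polynomial of `a : Fin n → ℝ`. -/
def esym (n k : ℕ) (a : Fin n → ℝ) : ℝ :=
  ∑ t ∈ Finset.powersetCard k (Finset.univ : Finset (Fin n)), ∏ i ∈ t, a i

/-- `σ_{k;i}(a) := σ_k(a)|_{a_i = 0}`. -/
def esymDel (n k : ℕ) (a : Fin n → ℝ) (i : Fin n) : ℝ :=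
  esym n k (Function.update a i 0)

/-- `H_k(a) = max_{1 ≤ i ≤ n} σ_{k-1;i}(a) a_i / σ_k(a)`. -/
def Hfun (n k : ℕ) (a : Fin n → ℝ) : ℝ :=
  ⨆ i : Fin n, esymDel n (k - 1) a i * a i / esym n k a

/-- `h_l(a) = min_{1 ≤ i ≤ n} σ_{l-1;i}(a) a_i / σ_l(a)`, with `h_0 = 0`. -/
def hfun (n l : ℕ) (a : Fin n → ℝ) : ℝ :=
  if l = 0 then 0 else ⨅ i : Fin n, esymDel n (l - 1) a i * a i / esym n l a

/-- The Hessian matrix `D²u(x)` of a function `u : ℝⁿ → ℝ`. -/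
def hess {n : ℕ} (u : En n → ℝ) (x : En n) : Matrix (Fin n) (Fin n) ℝ :=
  Matrix.of fun i j =>
    fderiv ℝ (fun y => fderiv ℝ u y (EuclideanSpace.single j 1)) x (EuclideanSpace.single i 1)

/-- `σ_k(λ(M))`: the `k`-th elementary symmetric function of the eigenvalues of `M`,
expressed via the coefficients of the characteristic polynomial. -/
def sigmaEig {n : ℕ} (k : ℕ) (M : Matrix (Fin n) (Fin n) ℝ) : ℝ :=
  (-1 : ℝ) ^ k * M.charpoly.coeff (n - k)

/-- The Hessian quotient operator `S_{k,l}(M) = σ_k(λ(M))/σ_l(λ(M))`. -/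
def Skl {n : ℕ} (k l : ℕ) (M : Matrix (Fin n) (Fin n) ℝ) : ℝ :=
  sigmaEig k M / sigmaEig l M

/-- The Garding cone `Γ_k = {λ : σ_j(λ) > 0, 1 ≤ j ≤ k}`. -/
def GammaCone (n k : ℕ) : Set (Fin n → ℝ) :=
  {lam | ∀ j : ℕ, 1 ≤ j → j ≤ k → 0 < esym n j lam}

/-- `ψ` is `k`-convex at `x`: the (symmetric) Hessian has eigenvalue vector in `closure Γ_k`. -/
def KConvexAt (n k : ℕ) (ψ : En n → ℝ) (x : En n) : Prop :=
  ∃ hsym : (hess ψ x).IsHermitian, hsym.eigenvalues ∈ closure (GammaCone n k)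

/-- Viscosity subsolution of `S_{k,l}(D²u) = 1` on `Ω`. -/
def ViscSubOn (n k l : ℕ) (Ω : Set (En n)) (u : En n → ℝ) : Prop :=
  UpperSemicontinuousOn u Ω ∧
  ∀ ψ : En n → ℝ, ContDiffOn ℝ 2 ψ Ω → (∀ x ∈ Ω, KConvexAt n k ψ x) →
    ∀ x₀ ∈ Ω, ψ x₀ = u x₀ → (∀ x ∈ Ω, u x ≤ ψ x) → 1 ≤ Skl k l (hess ψ x₀)

/-- Viscosity supersolution of `S_{k,l}(D²u) = 1` on `Ω`. -/
def ViscSupOn (n k l : ℕ) (Ω : Set (En n)) (u : En n → ℝ) : Prop :=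
  LowerSemicontinuousOn u Ω ∧
  ∀ ψ : En n → ℝ, ContDiffOn ℝ 2 ψ Ω → (∀ x ∈ Ω, KConvexAt n k ψ x) →
    ∀ x₀ ∈ Ω, ψ x₀ = u x₀ → (∀ x ∈ Ω, ψ x ≤ u x) → Skl k l (hess ψ x₀) ≤ 1

/-- Viscosity solution of the exterior Dirichlet problem
`S_{k,l}(D²u) = 1` in `ℝⁿ ∖ D̄`, `u = φ` on `∂D`, `u ∈ C⁰(ℝⁿ ∖ D)`. -/
def ExtViscSolution (n k l : ℕ) (D : Set (En n)) (φ u : En n → ℝ) : Prop :=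
  ContinuousOn u Dᶜ ∧
  ViscSubOn n k l (closure D)ᶜ u ∧
  ViscSupOn n k l (closure D)ᶜ u ∧
  ∀ x ∈ frontier D, u x = φ x

/-- A smooth, bounded, strictly convex open set. -/
structure SmoothStrictlyConvexDomain (n : ℕ) (D : Set (En n)) : Prop where
  isOpen : IsOpen D
  nonempty : D.Nonempty
  bounded : Bornology.IsBounded D
  strictConvex : StrictConvex ℝ D
  smoothBoundary : ∃ f : En n → ℝ, ContDiff ℝ (⊤ : ℕ∞) f ∧ D = {x | f x < 0} ∧
    ∀ x ∈ frontier D, fderiv ℝ f x ≠ 0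

/-- `½ xᵀ A x`. -/
def quadForm {n : ℕ} (A : Matrix (Fin n) (Fin n) ℝ) (x : En n) : ℝ :=
  (1 / 2) * ∑ i, ∑ j, A i j * x i * x j

/-- `s(x) = ½ ∑ a_i x_i²` (i.e. `½ xᵀAx` for `A = diag a`). -/
def sdiag {n : ℕ} (a : Fin n → ℝ) (x : En n) : ℝ :=
  (1 / 2) * ∑ i, a i * x i ^ 2

end

/-!
The chain rule gives `∂ⱼu = w'(s) aⱼ xⱼ`; differentiating once more, `D²u(x)` is the diagonal
matrix `w'(s) A` plus the rank-one matrix `w''(s) (Ax)(Ax)ᵀ`. For `D + b cᵀ` with `D` diagonal,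
the matrix determinant lemma (applied over the fraction field of `ℝ[X]`, where `X - dᵢ` is
invertible) gives
`det (X - D - b cᵀ) = ∏ᵢ (X - dᵢ) - ∑ᵢ bᵢ cᵢ ∏_{j ≠ i} (X - dⱼ)`,
and Vieta's formulas turn this into `σ_k(D + b cᵀ) = σ_k(d) + ∑ᵢ bᵢ cᵢ σ_{k-1;i}(d)`.
Homogeneity of `σ_k` then produces the powers of `w'(s)`.
-/

open Polynomial Matrix

namespace Matrix

variable {ι : Type*} [Fintype ι] [DecidableEq ι]

theorem det_diagonal_add_vecMulVec_of_ne_zero {K : Type*} [Field K] {d : ι → K}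
    (hd : ∀ i, d i ≠ 0) (u v : ι → K) :
    (diagonal d + vecMulVec u v).det =
      ∏ i, d i + ∑ i, u i * v i * ∏ j ∈ Finset.univ.erase i, d j := by
  have hfactor :
      diagonal d + vecMulVec u v = diagonal d * (1 + vecMulVec (fun i => u i / d i) v) := by
    ext i j
    have hdi := hd i
    simp only [add_apply, diagonal_mul, diagonal_apply, one_apply, vecMulVec_apply]
    split_ifs <;> field_simp
    ring
  rw [hfactor, det_mul, det_diagonal, vecMulVec_eq Unit, det_one_add_replicateCol_mul_replicateRow,
    mul_add, mul_one, dotProduct, Finset.mul_sum]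
  congr 1
  refine Finset.sum_congr rfl fun i _ => ?_
  rw [← Finset.mul_prod_erase _ _ (Finset.mem_univ i)]
  field_simp [hd i]

theorem det_diagonal_add_vecMulVec_of_isDomain {R : Type*} [CommRing R] [IsDomain R]
    {d : ι → R} (hd : ∀ i, d i ≠ 0) (u v : ι → R) :
    (diagonal d + vecMulVec u v).det =
      ∏ i, d i + ∑ i, u i * v i * ∏ j ∈ Finset.univ.erase i, d j := by
  let φ := algebraMap R (FractionRing R)
  have hφ : Function.Injective φ := IsFractionRing.injective _ _
  apply hφ
  have hmap : (diagonal d + vecMulVec u v).map φ =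
      diagonal (fun i => φ (d i)) + vecMulVec (fun i => φ (u i)) (fun i => φ (v i)) := by
    ext i j; by_cases h : i = j <;> simp [h, vecMulVec_apply]
  rw [RingHom.map_det, RingHom.mapMatrix_apply, hmap,
    det_diagonal_add_vecMulVec_of_ne_zero fun i => (map_ne_zero_iff φ hφ).2 (hd i)]
  simp [map_prod]

theorem charpoly_diagonal_add_vecMulVec {R : Type*} [CommRing R] [IsDomain R] (a u v : ι → R) :
    (diagonal a + vecMulVec u v).charpoly =
      ∏ i, (X - C (a i)) - ∑ i, C (u i * v i) * ∏ j ∈ Finset.univ.erase i, (X - C (a j)) := by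
  have hcharmatrix : charmatrix (diagonal a + vecMulVec u v) =
      diagonal (fun i => X - C (a i)) + vecMulVec (fun i => -C (u i)) (fun i => C (v i)) := by
    refine Matrix.ext fun i j => ?_
    rcases eq_or_ne i j with rfl | hij
    · simp only [charmatrix_apply_eq, add_apply, diagonal_apply_eq, vecMulVec_apply, map_add,
        map_mul, neg_mul]
      ring
    · simp [vecMulVec_apply, hij]
  rw [charpoly, hcharmatrix, det_diagonal_add_vecMulVec_of_isDomain fun i => X_sub_C_ne_zero _,
    sub_eq_add_neg, ← Finset.sum_neg_distrib]
  simp [C_mul]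

end Matrix

theorem Polynomial.coeff_prod_X_sub_C_card_sub {ι R : Type*} [CommRing R] (s : Finset ι)
    (f : ι → R) {k : ℕ} (hk : k ≤ s.card) :
    (∏ i ∈ s, (X - C (f i))).coeff (s.card - k) =
      (-1) ^ k * ∑ t ∈ s.powersetCard k, ∏ i ∈ t, f i := by
  have hcard : Multiset.card (s.val.map f) = s.card := Multiset.card_map _ _
  have hmap : ∏ i ∈ s, (X - C (f i)) = ((s.val.map f).map fun r => X - C r).prod := by
    rw [Multiset.map_map]; rfl
  rw [hmap, Multiset.prod_X_sub_C_coeff _ (hcard ▸ Nat.sub_le _ _), hcard, Nat.sub_sub_self hk,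
    Finset.esymm_map_val]

theorem esymDel_eq_sum_powersetCard_erase {n : ℕ} (m : ℕ) (a : Fin n → ℝ) (i : Fin n) :
    esymDel n m a i = ∑ t ∈ (Finset.univ.erase i).powersetCard m, ∏ j ∈ t, a j := by
  rw [esymDel, esym, ← Finset.sum_filter_add_sum_filter_not _ (fun t => i ∈ t)]
  have hvanish : ∑ t ∈ (Finset.univ.powersetCard m).filter (fun t => i ∈ t),
      ∏ j ∈ t, Function.update a i 0 j = 0 :=
    Finset.sum_eq_zero fun t ht =>
      Finset.prod_eq_zero (Finset.mem_filter.1 ht).2 (Function.update_self i 0 a)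
  have hfilter : (Finset.univ.powersetCard m).filter (fun t => i ∉ t) =
      (Finset.univ.erase i).powersetCard m := by
    ext t
    simp only [Finset.mem_filter, Finset.mem_powersetCard, Finset.subset_erase]
    tauto
  rw [hvanish, zero_add, hfilter]
  refine Finset.sum_congr rfl fun t ht => Finset.prod_congr rfl fun j hj => ?_
  exact Function.update_of_ne (Finset.ne_of_mem_erase ((Finset.mem_powersetCard.1 ht).1 hj)) 0 a

theorem sigmaEig_diagonal_add_vecMulVec {n k : ℕ} (hk₁ : 1 ≤ k) (hk : k ≤ n)
    (a u v : Fin n → ℝ) :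
    sigmaEig k (diagonal a + vecMulVec u v) =
      esym n k a + ∑ i, u i * v i * esymDel n (k - 1) a i := by
  obtain ⟨m, rfl⟩ : ∃ m, k = m + 1 := ⟨k - 1, by omega⟩
  have hcoeff_univ :
      (∏ i, (X - C (a i))).coeff (n - (m + 1)) = (-1) ^ (m + 1) * esym n (m + 1) a := by
    have h := coeff_prod_X_sub_C_card_sub Finset.univ a (k := m + 1) (by simpa using hk)
    rwa [Finset.card_univ, Fintype.card_fin] at h
  have hcoeff_erase : ∀ i, (∏ j ∈ Finset.univ.erase i, (X - C (a j))).coeff (n - (m + 1)) =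
      (-1) ^ m * esymDel n m a i := fun i => by
    have h := coeff_prod_X_sub_C_card_sub (Finset.univ.erase i) a (k := m)
      (by simpa using Nat.le_sub_one_of_lt hk)
    rwa [Finset.card_erase_of_mem (Finset.mem_univ i), Finset.card_univ, Fintype.card_fin,
      show n - 1 - m = n - (m + 1) by omega, ← esymDel_eq_sum_powersetCard_erase] at h
  have hsq : ((-1 : ℝ) ^ m) ^ 2 = 1 := by rw [← pow_mul, mul_comm, pow_mul, neg_one_sq, one_pow]
  rw [sigmaEig, charpoly_diagonal_add_vecMulVec, coeff_sub, finsetSum_coeff, hcoeff_univ,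
    Nat.add_sub_cancel]
  simp only [coeff_C_mul, hcoeff_erase]
  rw [Finset.sum_congr rfl fun i _ => mul_left_comm (u i * v i) ((-1 : ℝ) ^ m) _,
    ← Finset.mul_sum]
  linear_combination (esym n (m + 1) a + ∑ i, u i * v i * esymDel n m a i) * hsq

theorem esym_smul {n : ℕ} (k : ℕ) (t : ℝ) (a : Fin n → ℝ) :
    esym n k (t • a) = t ^ k * esym n k a := by
  rw [esym, esym, Finset.mul_sum]
  refine Finset.sum_congr rfl fun s hs => ?_
  rw [← (Finset.mem_powersetCard.1 hs).2, ← Finset.prod_const, ← Finset.prod_mul_distrib]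
  rfl

theorem esymDel_smul {n : ℕ} (k : ℕ) (t : ℝ) (a : Fin n → ℝ) (i : Fin n) :
    esymDel n k (t • a) i = t ^ k * esymDel n k a i := by
  rw [esymDel, esymDel, ← esym_smul, ← Function.update_smul, smul_zero]

section Hessian

variable {n : ℕ}

theorem hasFDerivAt_sdiag (a : Fin n → ℝ) (y : En n) :
    HasFDerivAt (sdiag a) (∑ i, (a i * y i) • (EuclideanSpace.proj i : En n →L[ℝ] ℝ)) y := by
  have hcoord : ∀ i, HasFDerivAt (fun z : En n => 1 / 2 * a i * z i ^ 2)
      ((a i * y i) • (EuclideanSpace.proj i : En n →L[ℝ] ℝ)) y := fun i => by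
    refine ((((EuclideanSpace.proj i : En n →L[ℝ] ℝ).hasFDerivAt).pow 2).const_mul
      (1 / 2 * a i)).congr_fderiv ?_
    rw [smul_smul]
    congr 1
    simp only [PiLp.proj_apply, Nat.add_one_sub_one, pow_one, nsmul_eq_mul, Nat.cast_ofNat]
    ring
  have hsum : sdiag a = fun z => ∑ i, 1 / 2 * a i * z i ^ 2 := by
    ext z
    simp only [sdiag, Finset.mul_sum, mul_assoc]
  rw [hsum]
  exact HasFDerivAt.fun_sum fun i _ => hcoord i

theorem fderiv_sdiag_single (a : Fin n → ℝ) (y : En n) (j : Fin n) :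
    fderiv ℝ (sdiag a) y (EuclideanSpace.single j 1) = a j * y j := by
  simp [(hasFDerivAt_sdiag a y).fderiv]

theorem fderiv_comp_sdiag_single {f : ℝ → ℝ} (hf : Differentiable ℝ f) (a : Fin n → ℝ)
    (y : En n) (j : Fin n) :
    fderiv ℝ (fun z => f (sdiag a z)) y (EuclideanSpace.single j 1) =
      deriv f (sdiag a y) * (a j * y j) := by
  have hcomp : HasFDerivAt (fun z => f (sdiag a z))
      (deriv f (sdiag a y) • fderiv ℝ (sdiag a) y) y :=
    (hasFDerivAt_sdiag a y).fderiv ▸ (hf _).hasDerivAt.comp_hasFDerivAt y (hasFDerivAt_sdiag a y)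
  rw [hcomp.fderiv, _root_.smul_apply, fderiv_sdiag_single, smul_eq_mul]

theorem hess_comp_sdiag {w : ℝ → ℝ} (hw : ContDiff ℝ 2 w) (a : Fin n → ℝ) (x : En n) :
    hess (fun y => w (sdiag a y)) x =
      deriv w (sdiag a x) • diagonal a +
        deriv (deriv w) (sdiag a x) • vecMulVec (fun i => a i * x i) (fun i => a i * x i) := by
  have hw₁ : Differentiable ℝ w := hw.differentiable two_ne_zero
  have hw₂ : Differentiable ℝ (deriv w) := hw.differentiable_deriv_two
  ext i j
  have hpartial : (fun y => fderiv ℝ (fun z => w (sdiag a z)) y (EuclideanSpace.single j 1)) =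
      fun y => deriv w (sdiag a y) * (a j * y j) :=
    funext fun y => fderiv_comp_sdiag_single hw₁ a y j
  have hcoord : HasFDerivAt (fun y : En n => a j * y j)
      (a j • (EuclideanSpace.proj j : En n →L[ℝ] ℝ)) x :=
    (EuclideanSpace.proj j : En n →L[ℝ] ℝ).hasFDerivAt.const_mul (a j)
  have houter : DifferentiableAt ℝ (fun y => deriv w (sdiag a y)) x :=
    (hw₂ _).comp x (hasFDerivAt_sdiag a x).differentiableAt
  rw [hess, of_apply, hpartial, fderiv_fun_mul houter hcoord.differentiableAt, hcoord.fderiv,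
    Matrix.add_apply, Matrix.smul_apply, Matrix.smul_apply, vecMulVec_apply]
  rcases eq_or_ne i j with rfl | hij
  · simp only [_root_.add_apply, _root_.smul_apply, PiLp.proj_apply, PiLp.single_eq_same,
      smul_eq_mul, mul_one, fderiv_comp_sdiag_single hw₂, diagonal_apply_eq]
    ring
  · simp only [_root_.add_apply, _root_.smul_apply, PiLp.proj_apply, ne_eq, hij, hij.symm,
      not_false_eq_true, PiLp.single_eq_of_ne, smul_eq_mul, mul_zero, fderiv_comp_sdiag_single hw₂,
      zero_add, diagonal_apply_ne]
    ring

end Hessian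

/-- Lemma 2.1 (Bao–Li–Li): for a G-Sym function `u(x) = w(½∑ aᵢxᵢ²)`,
`D²u = w'(s) A + w''(s) (Ax)(Ax)ᵀ` and
`σ_k(λ(D²u)) = σ_k(a) w'(s)^k + w''(s) w'(s)^{k-1} ∑ σ_{k-1;i}(a)(aᵢxᵢ)²`. -/
theorem hessian_of_gsym_function
    (n : ℕ) (a : Fin n → ℝ) (w : ℝ → ℝ) (hw : ContDiff ℝ 2 w)
    (x : En n) :
    hess (fun y : En n => w (sdiag a y)) x =
      deriv w (sdiag a x) • Matrix.diagonal a +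
        deriv (deriv w) (sdiag a x) •
          Matrix.vecMulVec (fun i => a i * x i) (fun i => a i * x i) ∧
    ∀ k : ℕ, 1 ≤ k → k ≤ n →
      sigmaEig k (hess (fun y : En n => w (sdiag a y)) x) =
        esym n k a * deriv w (sdiag a x) ^ k +
          deriv (deriv w) (sdiag a x) * deriv w (sdiag a x) ^ (k - 1) *
            ∑ i, esymDel n (k - 1) a i * (a i * x i) ^ 2 := by
  have hhess := hess_comp_sdiag hw a x
  refine ⟨hhess, fun k hk₁ hk => ?_⟩
  rw [hhess, ← Matrix.diagonal_smul, ← Matrix.smul_vecMulVec,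
    sigmaEig_diagonal_add_vecMulVec hk₁ hk, esym_smul, mul_comm (_ ^ k), Finset.mul_sum]
  congr 1
  refine Finset.sum_congr rfl fun i _ => ?_
  rw [Pi.smul_apply, esymDel_smul, smul_eq_mul]
  ring
end

section
/- Let n ≥ 3, 1 ≤ l < k ≤ n, α > 0, and let A = diag(a_1,…,a_n) ∈ 𝒜_{k,l} be diagonal with a = (a_1,…,a_n), H = H_k(a), h = h_l(a), ℋ = (k−l)/(2(H−h)), and ω_α(x) := ω_α(½ xᵀA x). (i) If k − l = 1 and H − h < 1/2, then the quantity μ₁(α) := β − s̄ + ∫_{s̄}^∞ (v_α(t) − 1) dt is finite and ω_α(x) = ½ xᵀA x + μ₁(α) + O(|x|^{2−2ℋ}) as |x| → ∞. (ii) If k − l ≥ 2, then μ₁(α) is finite and there exists θ ∈ ((k−l−2)/(n−2), 1] (depending only on n, k, l, A) such that ω_α(x) = ½ xᵀA x + μ₁(α) + O(|x|^{θ(2−n)}) as |x| → ∞. -/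
open scoped BigOperators
open Filter MeasureTheory Set

noncomputable section

/-- `ℋ = (k − l)/(2(H − h))`. -/
def calH (k l : ℕ) (H h : ℝ) : ℝ := ((k : ℝ) - l) / (2 * (H - h))

/-- The defining property of the function `v_α`: for every `s > 0`, `v_α(s) > 1` and
`(v_α(s)^{k−l} − 1) v_α(s)^{2ℋh} = α s^{−ℋ}`. -/
def IsVsol (k l : ℕ) (H h α : ℝ) (v : ℝ → ℝ) : Prop :=
  ∀ s : ℝ, 0 < s → 1 < v s ∧
    (v s ^ (k - l) - 1) * v s ^ (2 * calH k l H h * h) = α * s ^ (-calH k l H h)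

/-- `ω_α(x) = β + ∫_{s̄}^{½xᵀAx} v_α(t) dt` for `A = diag a`. -/
def omegaA {n : ℕ} (β sbar : ℝ) (v : ℝ → ℝ) (a : Fin n → ℝ) (x : En n) : ℝ :=
  β + ∫ t in sbar..(sdiag a x), v t

end

/-!
Since `v_α > 1` and `h ≥ 0`, the defining equation gives `0 < v_α(s) - 1 ≤ α s^{-ℋ}`. The ratios
`σ_{k-1;i}(a) a_i / σ_k(a)` sum to `k`, so `k/n ≤ H_k ≤ 1`, and likewise `0 < h_l ≤ l/n`; hence
`0 < H - h < 1`, which forces `ℋ > 1` in both cases. Then `v_α - 1` is integrable at infinity,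
`ω_α(x) - s - μ₁(α) = -∫_s^∞ (v_α - 1)` with `s = ½ xᵀAx ≥ c|x|²`, and this tail is
`O(s^{1-ℋ}) = O(|x|^{2-2ℋ})`. In case (ii), `ℋ > (k-l)/2` makes `θ = min(1, 2(ℋ-1)/(n-2))`
exceed `(k-l-2)/(n-2)` while `θ(2-n) ≥ 2 - 2ℋ`.
-/

section ElementarySymmetric

open Finset

lemma esymDel_eq_sum_filter (n m : ℕ) (a : Fin n → ℝ) (i : Fin n) :
    esymDel n m a i = ∑ t ∈ (Finset.powersetCard m univ).filter (i ∉ ·), ∏ j ∈ t, a j := by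
  rw [esymDel, esym, sum_filter]
  refine sum_congr rfl fun t _ => ?_
  split_ifs with hi
  · exact prod_eq_zero hi (Function.update_self ..)
  · exact prod_congr rfl fun j hj => Function.update_of_ne (ne_of_mem_of_not_mem hj hi) _ _

lemma mul_esymDel_eq_sum_filter (n m : ℕ) (a : Fin n → ℝ) (i : Fin n) :
    a i * esymDel n m a i =
      ∑ t ∈ (Finset.powersetCard (m + 1) univ).filter (i ∈ ·), ∏ j ∈ t, a j := by
  rw [esymDel_eq_sum_filter, mul_sum]
  refine sum_nbij' (insert i) (fun t => t.erase i) ?_ ?_ ?_ ?_ ?_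
  · simp +contextual [card_insert_of_notMem]
  · simp +contextual [card_erase_of_mem]
  · simp +contextual
  · simp +contextual [insert_erase]
  · simp +contextual

lemma sum_mul_esymDel (n m : ℕ) (a : Fin n → ℝ) :
    ∑ i, a i * esymDel n m a i = (m + 1) * esym n (m + 1) a := by
  simp_rw [mul_esymDel_eq_sum_filter, sum_filter]
  rw [sum_comm, esym, mul_sum]
  refine sum_congr rfl fun t ht => ?_
  rw [sum_ite_mem, Finset.univ_inter, sum_const, (mem_powersetCard.1 ht).2, nsmul_eq_mul]
  push_cast
  ring

lemma mul_esymDel_le_esym {n : ℕ} (m : ℕ) {a : Fin n → ℝ} (ha : ∀ i, 0 ≤ a i) (i : Fin n) :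
    a i * esymDel n m a i ≤ esym n (m + 1) a := by
  rw [mul_esymDel_eq_sum_filter, esym]
  exact Finset.sum_le_sum_of_subset_of_nonneg (Finset.filter_subset _ _)
    fun t _ _ => Finset.prod_nonneg fun j _ => ha j

lemma mul_esymDel_pos {n m : ℕ} (hm : m < n) {a : Fin n → ℝ} (ha : ∀ i, 0 < a i) (i : Fin n) :
    0 < a i * esymDel n m a i := by
  rw [mul_esymDel_eq_sum_filter]
  refine Finset.sum_pos (fun t _ => Finset.prod_pos fun j _ => ha j) ?_
  obtain ⟨t, hit, -, ht⟩ := Finset.exists_subsuperset_card_eq (Finset.subset_univ {i})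
    (by simp) (by simpa using hm : m + 1 ≤ (Finset.univ : Finset (Fin n)).card)
  exact ⟨t, by simp_all⟩

lemma esym_pos {n k : ℕ} (hk : k ≤ n) {a : Fin n → ℝ} (ha : ∀ i, 0 < a i) : 0 < esym n k a :=
  Finset.sum_pos (fun t _ => Finset.prod_pos fun i _ => ha i)
    (Finset.powersetCard_nonempty.2 (by simpa using hk))

end ElementarySymmetric

section HessianQuotientRatios

variable {n : ℕ} {a : Fin n → ℝ}

lemma sum_esymDel_mul_div_esym {k : ℕ} (hk : 1 ≤ k) (hkn : k ≤ n) (ha : ∀ i, 0 < a i) :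
    ∑ i, esymDel n (k - 1) a i * a i / esym n k a = k := by
  obtain ⟨m, rfl⟩ : ∃ m, k = m + 1 := ⟨k - 1, by omega⟩
  rw [← Finset.sum_div, div_eq_iff (esym_pos hkn ha).ne', Nat.add_sub_cancel]
  simp_rw [mul_comm (esymDel n m a _)]
  rw [sum_mul_esymDel]
  push_cast
  ring

lemma div_le_Hfun {k : ℕ} (hk : 1 ≤ k) (hkn : k ≤ n) (ha : ∀ i, 0 < a i) :
    (k : ℝ) / n ≤ Hfun n k a := by
  have hn : (0 : ℝ) < n := by exact_mod_cast (show 0 < n by omega)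
  rw [div_le_iff₀' hn, ← sum_esymDel_mul_div_esym hk hkn ha]
  calc ∑ i, esymDel n (k - 1) a i * a i / esym n k a
      ≤ ∑ _i : Fin n, Hfun n k a :=
        Finset.sum_le_sum fun i _ => le_ciSup (Finite.bddAbove_range (fun i =>
          esymDel n (k - 1) a i * a i / esym n k a)) i
    _ = n * Hfun n k a := by simp

lemma Hfun_le_one {k : ℕ} (hk : 1 ≤ k) (hkn : k ≤ n) (ha : ∀ i, 0 < a i) : Hfun n k a ≤ 1 := by
  refine Real.iSup_le (fun i => ?_) zero_le_one
  rw [div_le_one (esym_pos hkn ha), mul_comm]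
  simpa [Nat.sub_add_cancel hk] using mul_esymDel_le_esym (k - 1) (fun j => (ha j).le) i

lemma hfun_pos {l : ℕ} (hl : 1 ≤ l) (hln : l ≤ n) (ha : ∀ i, 0 < a i) : 0 < hfun n l a := by
  have : Nonempty (Fin n) := ⟨⟨0, by omega⟩⟩
  rw [hfun, if_neg (by omega)]
  obtain ⟨i, hi⟩ :=
    exists_eq_ciInf_of_finite (f := fun i => esymDel n (l - 1) a i * a i / esym n l a)
  rw [← hi, mul_comm]
  exact div_pos (mul_esymDel_pos (by omega) ha i) (esym_pos hln ha)

lemma hfun_le_div {l : ℕ} (hl : 1 ≤ l) (hln : l ≤ n) (ha : ∀ i, 0 < a i) :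
    hfun n l a ≤ (l : ℝ) / n := by
  have hn : (0 : ℝ) < n := by exact_mod_cast (show 0 < n by omega)
  rw [le_div_iff₀' hn, ← sum_esymDel_mul_div_esym hl hln ha, hfun, if_neg (by omega)]
  calc (n : ℝ) * ⨅ i, esymDel n (l - 1) a i * a i / esym n l a
      = ∑ _i : Fin n, ⨅ i, esymDel n (l - 1) a i * a i / esym n l a := by simp
    _ ≤ _ := Finset.sum_le_sum fun i _ => ciInf_le (Finite.bddBelow_range _) i

lemma Hfun_sub_hfun_pos_and_lt_one {k l : ℕ} (hl : 1 ≤ l) (hlk : l < k) (hkn : k ≤ n)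
    (ha : ∀ i, 0 < a i) : 0 < Hfun n k a - hfun n l a ∧ Hfun n k a - hfun n l a < 1 := by
  have hkl : (l : ℝ) / n < k / n :=
    div_lt_div_of_pos_right (by exact_mod_cast hlk) (by exact_mod_cast (show 0 < n by omega))
  constructor
  · linarith [div_le_Hfun (by omega) hkn ha, hfun_le_div hl (by omega) ha]
  · linarith [Hfun_le_one (by omega) hkn ha, hfun_pos hl (by omega) ha]

end HessianQuotientRatios

lemma lt_calH {k l : ℕ} {H h c : ℝ} (hlk : l < k) (hpos : 0 < H - h) (hc : H - h < c) :
    ((k : ℝ) - l) / (2 * c) < calH k l H h :=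
  div_lt_div_of_pos_left (sub_pos.2 (by exact_mod_cast hlk)) (by positivity) (by linarith)

lemma intervalIntegral_add_integral_Ioi_sub_one {v : ℝ → ℝ} {c s : ℝ}
    (hv : IntegrableOn (fun t => v t - 1) (Ioi c)) (hcs : c ≤ s) :
    ∫ t in c..s, v t = s - c + ((∫ t in Ioi c, (v t - 1)) - ∫ t in Ioi s, (v t - 1)) := by
  have hvi : IntervalIntegrable (fun t => v t - 1) volume c s :=
    (intervalIntegrable_iff_integrableOn_Ioc_of_le hcs).2 (hv.mono_set Ioc_subset_Ioi_self)
  rw [intervalIntegral.integral_Ioi_sub_Ioi hv hcs, intervalIntegral.integral_sub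
    (by simpa using hvi.add (intervalIntegrable_const (c := 1))) intervalIntegrable_const]
  simp

namespace IsVsol

variable {k l : ℕ} {H h α : ℝ} {v : ℝ → ℝ}

lemma sub_one_le (hv : IsVsol k l H h α v) (hlk : l < k) (hh : 0 ≤ h) (hℋ : 0 ≤ calH k l H h)
    {t : ℝ} (ht : 0 < t) : v t - 1 ≤ α * t ^ (-calH k l H h) := by
  obtain ⟨hv1, heq⟩ := hv t ht
  have hpow : v t ≤ v t ^ (k - l) := le_self_pow₀ hv1.le (by omega)
  have hrpow : 1 ≤ v t ^ (2 * calH k l H h * h) := Real.one_le_rpow hv1.le (by positivity)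
  nlinarith

lemma antitoneOn (hv : IsVsol k l H h α v) (hlk : l < k) (hα : 0 ≤ α) (hh : 0 ≤ h)
    (hℋ : 0 ≤ calH k l H h) : AntitoneOn v (Ioi 0) := by
  intro s₁ hs₁ s₂ hs₂ hs
  by_contra! hlt
  obtain ⟨hv₁, heq₁⟩ := hv s₁ hs₁
  obtain ⟨hv₂, heq₂⟩ := hv s₂ hs₂
  have hpow : v s₁ ^ (k - l) < v s₂ ^ (k - l) := pow_lt_pow_left₀ hlt (by linarith) (by omega)
  have hpow₁ : 1 < v s₁ ^ (k - l) := one_lt_pow₀ hv₁ (by omega)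
  have hrpow : v s₁ ^ (2 * calH k l H h * h) ≤ v s₂ ^ (2 * calH k l H h * h) :=
    Real.rpow_le_rpow (by linarith) hlt.le (by positivity)
  have hrpow₁ : 1 ≤ v s₁ ^ (2 * calH k l H h * h) := Real.one_le_rpow hv₁.le (by positivity)
  have hs' : s₂ ^ (-calH k l H h) ≤ s₁ ^ (-calH k l H h) :=
    Real.rpow_le_rpow_of_nonpos hs₁ hs (by linarith)
  nlinarith [mul_le_mul_of_nonneg_left hs' hα]

lemma integrableOn_sub_one (hv : IsVsol k l H h α v) (hlk : l < k) (hα : 0 ≤ α) (hh : 0 ≤ h)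
    (hℋ : 1 < calH k l H h) {c : ℝ} (hc : 0 < c) : IntegrableOn (fun t => v t - 1) (Ioi c) := by
  -- `IsVsol` does not make `v` measurable; its monotonicity does.
  have hmeas : AEStronglyMeasurable (fun t => v t - 1) (volume.restrict (Ioi c)) :=
    ((aemeasurable_restrict_of_antitoneOn measurableSet_Ioi
      ((hv.antitoneOn hlk hα hh (by linarith)).mono (Ioi_subset_Ioi hc.le))).sub_const
        1).aestronglyMeasurable
  refine Integrable.mono' ((integrableOn_Ioi_rpow_of_lt (a := -calH k l H h) (by linarith)
    hc).const_mul α) hmeas ?_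
  filter_upwards [ae_restrict_mem measurableSet_Ioi] with t ht
  have ht₀ : 0 < t := hc.trans ht
  rw [Real.norm_eq_abs, abs_of_nonneg (by linarith [(hv t ht₀).1])]
  exact hv.sub_one_le hlk hh (by linarith) ht₀

lemma integral_Ioi_sub_one_le (hv : IsVsol k l H h α v) (hlk : l < k) (hα : 0 ≤ α)
    (hh : 0 ≤ h) (hℋ : 1 < calH k l H h) {c : ℝ} (hc : 0 < c) :
    ∫ t in Ioi c, (v t - 1) ≤ α / (calH k l H h - 1) * c ^ (1 - calH k l H h) := by
  calc ∫ t in Ioi c, (v t - 1)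
      ≤ ∫ t in Ioi c, α * t ^ (-calH k l H h) :=
        setIntegral_mono_on (hv.integrableOn_sub_one hlk hα hh hℋ hc)
          ((integrableOn_Ioi_rpow_of_lt (by linarith) hc).const_mul α) measurableSet_Ioi
          fun t ht => hv.sub_one_le hlk hh (by linarith) (hc.trans ht)
    _ = α / (calH k l H h - 1) * c ^ (1 - calH k l H h) := by
        rw [integral_const_mul, integral_Ioi_rpow_of_lt (by linarith) hc,
          show -calH k l H h + 1 = 1 - calH k l H h by ring, neg_div, ← div_neg, neg_sub]
        ring

lemma abs_sub_le (hv : IsVsol k l H h α v) (hlk : l < k) (hα : 0 ≤ α) (hh : 0 ≤ h)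
    (hℋ : 1 < calH k l H h) (β : ℝ) {c s : ℝ} (hc : 0 < c) (hcs : c ≤ s) :
    |(β + ∫ t in c..s, v t) - (s + (β - c + ∫ t in Ioi c, (v t - 1)))| ≤
      α / (calH k l H h - 1) * s ^ (1 - calH k l H h) := by
  have hs : 0 < s := hc.trans_le hcs
  have htail_nonneg : 0 ≤ ∫ t in Ioi s, (v t - 1) :=
    setIntegral_nonneg measurableSet_Ioi fun t ht => by linarith [(hv t (hs.trans ht)).1]
  rw [intervalIntegral_add_integral_Ioi_sub_one (hv.integrableOn_sub_one hlk hα hh hℋ hc) hcs,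
    show ∀ x y : ℝ, β + (s - c + (x - y)) - (s + (β - c + x)) = -y by intros; ring,
    abs_neg, abs_of_nonneg htail_nonneg]
  exact hv.integral_Ioi_sub_one_le hlk hα hh hℋ hs

end IsVsol

lemma exists_pos_mul_norm_sq_le_sdiag {n : ℕ} {a : Fin n → ℝ} (ha : ∀ i, 0 < a i) :
    ∃ c > 0, ∀ x : En n, c * ‖x‖ ^ 2 ≤ sdiag a x := by
  obtain ⟨c, hc, hca⟩ : ∃ c > 0, ∀ i, c ≤ a i := by
    rcases isEmpty_or_nonempty (Fin n) with _ | _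
    · exact ⟨1, one_pos, isEmptyElim⟩
    · obtain ⟨i₀, hi₀⟩ := Finite.exists_min a
      exact ⟨a i₀, ha i₀, hi₀⟩
  refine ⟨c / 2, by positivity, fun x => ?_⟩
  rw [EuclideanSpace.norm_sq_eq, sdiag, Finset.mul_sum, Finset.mul_sum]
  refine Finset.sum_le_sum fun i _ => ?_
  rw [Real.norm_eq_abs, sq_abs]
  nlinarith [hca i, sq_nonneg (x i)]

lemma exists_bound_comp_sdiag {n : ℕ} {a : Fin n → ℝ} (ha : ∀ i, 0 < a i) {G : ℝ → ℝ}
    {s₀ K e p : ℝ} (he : e ≤ 0) (hep : 2 * e ≤ p) (hG : ∀ s, s₀ ≤ s → |G s| ≤ K * s ^ e) :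
    ∃ C R : ℝ, 0 < C ∧ 0 < R ∧ ∀ x : En n, R ≤ ‖x‖ → |G (sdiag a x)| ≤ C * ‖x‖ ^ p := by
  obtain ⟨c, hc, hcx⟩ := exists_pos_mul_norm_sq_le_sdiag ha
  refine ⟨(|K| + 1) * c ^ e, max 1 √(max s₀ 1 / c), by positivity, by positivity,
    fun x hx => ?_⟩
  have hx₁ : 1 ≤ ‖x‖ := le_of_max_le_left hx
  have hs₀ : max s₀ 1 ≤ c * ‖x‖ ^ 2 := by
    have := (Real.sqrt_le_iff.1 (le_of_max_le_right hx)).2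
    rwa [div_le_iff₀' hc] at this
  have hcx₀ : 0 < c * ‖x‖ ^ 2 := by positivity
  calc |G (sdiag a x)| ≤ K * sdiag a x ^ e := hG _ ((le_max_left _ _).trans (hs₀.trans (hcx x)))
    _ ≤ |K| * (c * ‖x‖ ^ 2) ^ e :=
        mul_le_mul (le_abs_self K) (Real.rpow_le_rpow_of_nonpos hcx₀ (hcx x) he)
          (Real.rpow_nonneg (hcx₀.le.trans (hcx x)) e) (abs_nonneg K)
    _ = |K| * c ^ e * ‖x‖ ^ (2 * e) := by
        rw [Real.mul_rpow hc.le (by positivity), Real.rpow_mul (norm_nonneg x)]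
        norm_cast
        ring
    _ ≤ (|K| + 1) * c ^ e * ‖x‖ ^ p := by
        gcongr
        linarith

lemma exists_theta_exponent {m N P : ℝ} (hN : 2 < N) (hmN : m < N) (hmP : m < 2 * P) :
    ∃ θ, (m - 2) / (N - 2) < θ ∧ θ ≤ 1 ∧ 2 - 2 * P ≤ θ * (2 - N) := by
  have hN₂ : 0 < N - 2 := by linarith
  refine ⟨min 1 (2 * (P - 1) / (N - 2)), lt_min ?_ ?_, min_le_left _ _, ?_⟩
  · rw [div_lt_one hN₂]
    linarith
  · exact div_lt_div_of_pos_right (by linarith) hN₂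
  · have := mul_le_mul_of_nonneg_right (min_le_right 1 (2 * (P - 1) / (N - 2))) hN₂.le
    rw [div_mul_cancel₀ _ hN₂.ne'] at this
    linarith

lemma omegaA_asymptotics {n k l : ℕ} {H h α : ℝ} {v : ℝ → ℝ} {a : Fin n → ℝ}
    (ha : ∀ i, 0 < a i) (hlk : l < k) (hα : 0 ≤ α) (hh : 0 ≤ h) (hv : IsVsol k l H h α v)
    (hℋ : 1 < calH k l H h) (β : ℝ) {sbar : ℝ} (hsbar : 0 < sbar) {p : ℝ}
    (hp : 2 - 2 * calH k l H h ≤ p) :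
    IntegrableOn (fun t => v t - 1) (Ioi sbar) ∧
      ∃ C R : ℝ, 0 < C ∧ 0 < R ∧ ∀ x : En n, R ≤ ‖x‖ →
        |omegaA β sbar v a x - (sdiag a x + (β - sbar + ∫ t in Ioi sbar, (v t - 1)))| ≤
          C * ‖x‖ ^ p :=
  ⟨hv.integrableOn_sub_one hlk hα hh hℋ hsbar,
    exists_bound_comp_sdiag ha (by linarith) (by linarith)
      fun _ hs => hv.abs_sub_le hlk hα hh hℋ β hsbar hs⟩

theorem omega_asymptotics_case_one_general
    (n k l : ℕ) (hn : 3 ≤ n) (hl1 : 1 ≤ l) (hlk : l < k) (hkn : k ≤ n)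
    (α : ℝ) (hα : 0 < α)
    (a : Fin n → ℝ) (ha : ∀ i, 0 < a i)
    (β sbar : ℝ) (hsbar : 0 < sbar)
    (v : ℝ → ℝ) (hv : IsVsol k l (Hfun n k a) (hfun n l a) α v) :
    (k - l = 1 ∧ Hfun n k a - hfun n l a < 1 / 2 →
      IntegrableOn (fun t => v t - 1) (Set.Ioi sbar) ∧
      ∃ C R : ℝ, 0 < C ∧ 0 < R ∧ ∀ x : En n, R ≤ ‖x‖ →
        |omegaA β sbar v a x -
            (sdiag a x + (β - sbar + ∫ t in Set.Ioi sbar, (v t - 1)))| ≤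
          C * ‖x‖ ^ (2 - 2 * calH k l (Hfun n k a) (hfun n l a))) ∧
    (2 ≤ k - l →
      IntegrableOn (fun t => v t - 1) (Set.Ioi sbar) ∧
      ∃ θ : ℝ, ((k : ℝ) - l - 2) / ((n : ℝ) - 2) < θ ∧ θ ≤ 1 ∧
        ∃ C R : ℝ, 0 < C ∧ 0 < R ∧ ∀ x : En n, R ≤ ‖x‖ →
          |omegaA β sbar v a x -
              (sdiag a x + (β - sbar + ∫ t in Set.Ioi sbar, (v t - 1)))| ≤
            C * ‖x‖ ^ (θ * (2 - (n : ℝ)))) := by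
  obtain ⟨hpos, hlt⟩ := Hfun_sub_hfun_pos_and_lt_one hl1 hlk hkn ha
  have hh := (hfun_pos hl1 (by omega) ha).le
  refine ⟨fun ⟨hkl, hhalf⟩ => omegaA_asymptotics ha hlk hα.le hh hv ?_ β hsbar le_rfl,
    fun hkl => ?_⟩
  · have hkl' : (k : ℝ) - l = 1 := by rw [← Nat.cast_sub hlk.le, hkl, Nat.cast_one]
    simpa [hkl'] using lt_calH hlk hpos hhalf
  · have hkl' : (2 : ℝ) ≤ k - l := by rw [← Nat.cast_sub hlk.le]; exact_mod_cast hkl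
    have hℋ : ((k : ℝ) - l) / 2 < calH k l (Hfun n k a) (hfun n l a) := by
      simpa using lt_calH hlk hpos hlt
    obtain ⟨θ, hθ, hθ₁, hp⟩ := exists_theta_exponent (m := (k : ℝ) - l) (N := n)
      (by exact_mod_cast hn)
      (by linarith [(Nat.cast_le (α := ℝ)).2 hkn, (Nat.one_le_cast (α := ℝ)).2 hl1])
      (by linarith [(div_lt_iff₀ two_pos).1 hℋ])
    exact (omegaA_asymptotics ha hlk hα.le hh hv (by linarith) β hsbar hp).imp_right
      fun hbound => ⟨θ, hθ, hθ₁, hbound⟩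

/-- Proposition 2.2 (i)(ii): asymptotics of the G-Sym subsolution `ω_α` when
`k − l = 1, H_k − h_l < 1/2` or `k − l ≥ 2`. -/
theorem omega_asymptotics_case_one
    (n k l : ℕ) (hn : 3 ≤ n) (hl1 : 1 ≤ l) (hlk : l < k) (hkn : k ≤ n)
    (α : ℝ) (hα : 0 < α)
    (a : Fin n → ℝ) (ha : ∀ i, 0 < a i)
    (hA : esym n k a = esym n l a)
    (β sbar : ℝ) (hsbar : 0 < sbar)
    (v : ℝ → ℝ) (hv : IsVsol k l (Hfun n k a) (hfun n l a) α v) :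
    (k - l = 1 ∧ Hfun n k a - hfun n l a < 1 / 2 →
      IntegrableOn (fun t => v t - 1) (Set.Ioi sbar) ∧
      ∃ C R : ℝ, 0 < C ∧ 0 < R ∧ ∀ x : En n, R ≤ ‖x‖ →
        |omegaA β sbar v a x -
            (sdiag a x + (β - sbar + ∫ t in Set.Ioi sbar, (v t - 1)))| ≤
          C * ‖x‖ ^ (2 - 2 * calH k l (Hfun n k a) (hfun n l a))) ∧
    (2 ≤ k - l →
      IntegrableOn (fun t => v t - 1) (Set.Ioi sbar) ∧
      ∃ θ : ℝ, ((k : ℝ) - l - 2) / ((n : ℝ) - 2) < θ ∧ θ ≤ 1 ∧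
        ∃ C R : ℝ, 0 < C ∧ 0 < R ∧ ∀ x : En n, R ≤ ‖x‖ →
          |omegaA β sbar v a x -
              (sdiag a x + (β - sbar + ∫ t in Set.Ioi sbar, (v t - 1)))| ≤
            C * ‖x‖ ^ (θ * (2 - (n : ℝ)))) :=
  omega_asymptotics_case_one_general n k l hn hl1 hlk hkn α hα a ha β sbar hsbar v hv
end

section
/- Let n = k = 2, l = 0, α > 0, and let A = diag(a_1, a_2) be diagonal with positive entries and det A = σ₂(λ(A)) = 1 (i.e. A ∈ 𝒜_{2,0}). For s > 0 set v_α(s) = √(1 + α/s) and, for fixed β ∈ ℝ and s̄ > 0, ω_α(s) = β + ∫_{s̄}^s v_α(t) dt and ω_α(x) := ω_α(½ xᵀA x). Then there exists a finite constant μ₂(α) = β − s̄ − (α/2) ln s̄ + ∫_{s̄}^∞ (v_α(t) − 1 − α/(2t)) dt such that ω_α(x) = ½ xᵀA x + (α/2) ln(½ xᵀA x) + μ₂(α) + O(|x|^{−2}) as |x| → ∞. -/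
open scoped BigOperators
open Filter MeasureTheory Set

section AUX
namespace OmegaAux

lemma sqrt_bounds {u : ℝ} (hu : 0 < u) :
    1 + u/2 - u^2/8 ≤ Real.sqrt (1+u) ∧ Real.sqrt (1+u) ≤ 1 + u/2 := by
  have h0 : (0:ℝ) ≤ 1 + u := by linarith
  have hr0 : 0 ≤ Real.sqrt (1+u) := Real.sqrt_nonneg _
  have hr2 : Real.sqrt (1+u) ^ 2 = 1 + u := Real.sq_sqrt h0
  set r := Real.sqrt (1+u) with hr
  have hr1 : 1 ≤ r := by nlinarith
  constructor
  · nlinarith [mul_nonneg (mul_nonneg (sq_nonneg (r-1)) (sub_nonneg.2 hr1)) (by linarith : (0:ℝ) ≤ r + 3)]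
  · nlinarith [sq_nonneg (2*r - 2 - u)]

lemma g_abs_le {α t : ℝ} (hα : 0 < α) (ht : 0 < t) :
    |Real.sqrt (1 + α/t) - 1 - α/(2*t)| ≤ α^2/8 * t^(-2:ℝ) := by
  have hu : 0 < α/t := div_pos hα ht
  obtain ⟨h1, h2⟩ := sqrt_bounds hu
  have ht2 : t ^ (-2:ℝ) = (t^2)⁻¹ := by
    rw [show ((-2:ℝ)) = -(2:ℕ) by norm_num, Real.rpow_neg ht.le, Real.rpow_natCast]
  have e1 : α/(2*t) = (α/t)/2 := by ring
  have e2 : α^2/8 * (t^2)⁻¹ = (α/t)^2/8 := by ring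
  rw [ht2, e1, e2, abs_le]
  constructor <;> linarith

lemma B_integrableOn {α c : ℝ} (hc : 0 < c) :
    IntegrableOn (fun t : ℝ => α^2/8 * t^(-2:ℝ)) (Set.Ioi c) :=
  (integrableOn_Ioi_rpow_of_lt (by norm_num) hc).const_mul _

lemma g_integrableOn {α : ℝ} (hα : 0 < α) {c : ℝ} (hc : 0 < c) :
    IntegrableOn (fun t => Real.sqrt (1 + α/t) - 1 - α/(2*t)) (Set.Ioi c) := by
  refine (B_integrableOn (α := α) hc).mono' ?_ ?_
  · apply Measurable.aestronglyMeasurable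
    fun_prop
  · filter_upwards [ae_restrict_mem measurableSet_Ioi] with t ht
    have ht0 : 0 < t := hc.trans ht
    simpa [Real.norm_eq_abs] using g_abs_le hα ht0

lemma B_integral {α c : ℝ} (hc : 0 < c) :
    ∫ t in Set.Ioi c, α^2/8 * t^(-2:ℝ) = α^2/(8*c) := by
  rw [MeasureTheory.integral_const_mul, integral_Ioi_rpow_of_lt (by norm_num) hc]
  rw [show ((-2:ℝ)+1) = -1 by norm_num, Real.rpow_neg_one]
  field_simp

lemma tail_bound {α : ℝ} (hα : 0 < α) {s : ℝ} (hs : 0 < s) :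
    |∫ t in Set.Ioi s, (Real.sqrt (1 + α/t) - 1 - α/(2*t))| ≤ α^2/(8*s) := by
  have h1 : |∫ t in Set.Ioi s, (Real.sqrt (1 + α/t) - 1 - α/(2*t))| ≤
      ∫ t in Set.Ioi s, |Real.sqrt (1 + α/t) - 1 - α/(2*t)| := by
    simpa [Real.norm_eq_abs] using
      MeasureTheory.norm_integral_le_integral_norm
        (μ := volume.restrict (Set.Ioi s)) (fun t => Real.sqrt (1 + α/t) - 1 - α/(2*t))
  have h2 : ∫ t in Set.Ioi s, |Real.sqrt (1 + α/t) - 1 - α/(2*t)| ≤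
      ∫ t in Set.Ioi s, α^2/8 * t^(-2:ℝ) := by
    refine MeasureTheory.integral_mono_ae (g_integrableOn hα hs).abs (B_integrableOn hs) ?_
    filter_upwards [ae_restrict_mem measurableSet_Ioi] with t ht
    exact g_abs_le hα (hs.trans ht)
  calc |∫ t in Set.Ioi s, (Real.sqrt (1 + α/t) - 1 - α/(2*t))|
      ≤ ∫ t in Set.Ioi s, α^2/8 * t^(-2:ℝ) := h1.trans h2
    _ = α^2/(8*s) := B_integral hs

lemma interval_val {α : ℝ} (hα : 0 < α) {sbar s : ℝ} (hsbar : 0 < sbar) (hle : sbar ≤ s) :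
    ∫ t in sbar..s, Real.sqrt (1 + α/t) =
      (s - sbar) + α/2*(Real.log s - Real.log sbar)
        + ∫ t in Set.Ioc sbar s, (Real.sqrt (1 + α/t) - 1 - α/(2*t)) := by
  have hs0 : 0 < s := lt_of_lt_of_le hsbar hle
  have hsub : Set.uIcc sbar s ⊆ Set.Ioi (0:ℝ) := by
    rw [Set.uIcc_of_le hle]; intro t ht; exact lt_of_lt_of_le hsbar ht.1
  have hvc : ContinuousOn (fun t:ℝ => Real.sqrt (1 + α/t)) (Set.Ioi 0) :=
    Real.continuous_sqrt.comp_continuousOn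
      (continuousOn_const.add (continuousOn_const.div continuousOn_id fun t ht => ne_of_gt ht))
  have hlc : ContinuousOn (fun t:ℝ => α/(2*t)) (Set.Ioi 0) :=
    continuousOn_const.div (continuousOn_const.mul continuousOn_id)
      fun t ht => by simp at ht; positivity
  have hiv : IntervalIntegrable (fun t:ℝ => Real.sqrt (1+α/t)) volume sbar s :=
    (hvc.mono hsub).intervalIntegrable
  have hil : IntervalIntegrable (fun t:ℝ => α/(2*t)) volume sbar s :=
    (hlc.mono hsub).intervalIntegrable
  have hi1 : IntervalIntegrable (fun _:ℝ => (1:ℝ)) volume sbar s := intervalIntegrable_const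
  have hsplit : (∫ t in sbar..s, (Real.sqrt (1+α/t) - 1 - α/(2*t)))
      = (∫ t in sbar..s, Real.sqrt (1+α/t)) - (∫ t in sbar..s, (1:ℝ))
        - ∫ t in sbar..s, α/(2*t) := by
    rw [intervalIntegral.integral_sub (hiv.sub hi1) hil, intervalIntegral.integral_sub hiv hi1]
  have h1 : (∫ t in sbar..s, (1:ℝ)) = s - sbar := by simp
  have h2 : (∫ t in sbar..s, α/(2*t)) = α/2 * (Real.log s - Real.log sbar) := by
    have e : ∀ t:ℝ, α/(2*t) = (α/2) * t⁻¹ := fun t => by ring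
    simp_rw [e]
    rw [intervalIntegral.integral_const_mul, integral_inv_of_pos hsbar hs0,
        Real.log_div hs0.ne' hsbar.ne']
  have h3 : (∫ t in sbar..s, (Real.sqrt (1+α/t) - 1 - α/(2*t)))
      = ∫ t in Set.Ioc sbar s, (Real.sqrt (1+α/t) - 1 - α/(2*t)) :=
    intervalIntegral.integral_of_le hle
  rw [← h3, hsplit, h1, h2]; ring

end OmegaAux
end AUX

/-- Case 2 / Proposition 2.2 (ii) for `n = k = 2, l = 0`: asymptotics of the radial-type
subsolution built from `v_α(s) = √(1 + α/s)`. -/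
theorem omega_asymptotics_monge_ampere_dim_two
    (α : ℝ) (hα : 0 < α)
    (a : Fin 2 → ℝ) (ha : ∀ i, 0 < a i)
    (hdet : esym 2 2 a = 1)
    (β sbar : ℝ) (hsbar : 0 < sbar) :
    IntegrableOn (fun t => Real.sqrt (1 + α / t) - 1 - α / (2 * t)) (Set.Ioi sbar) ∧
    ∃ C R : ℝ, 0 < C ∧ 0 < R ∧ ∀ x : En 2, R ≤ ‖x‖ →
      |omegaA β sbar (fun s => Real.sqrt (1 + α / s)) a x -
          (sdiag a x + α / 2 * Real.log (sdiag a x) +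
            (β - sbar - α / 2 * Real.log sbar +
              ∫ t in Set.Ioi sbar, (Real.sqrt (1 + α / t) - 1 - α / (2 * t))))| ≤
        C * ‖x‖ ^ (-2 : ℝ) := by
  refine ⟨OmegaAux.g_integrableOn hα hsbar, ?_⟩
  set m := min (a 0) (a 1) with hm
  have hm0 : 0 < m := lt_min (ha 0) (ha 1)
  refine ⟨α^2/(4*m), Real.sqrt (2*sbar/m) + 1, by positivity, by positivity, ?_⟩
  intro x hx
  have hxn : 0 < ‖x‖ := lt_of_lt_of_le (by positivity) hx
  have hnormsq : ‖x‖^2 = x 0^2 + x 1^2 := by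
    rw [EuclideanSpace.norm_eq, Real.sq_sqrt (by positivity)]
    simp [Fin.sum_univ_two, Real.norm_eq_abs, sq_abs]
  have hs_lb : m/2 * ‖x‖^2 ≤ sdiag a x := by
    have h0 : m ≤ a 0 := min_le_left _ _
    have h1 : m ≤ a 1 := min_le_right _ _
    have : sdiag a x = 1/2 * (a 0 * x 0^2 + a 1 * x 1^2) := by
      simp [sdiag, Fin.sum_univ_two]
    rw [this, hnormsq]
    nlinarith [sq_nonneg (x 0), sq_nonneg (x 1)]
  have hRsq : 2*sbar/m ≤ ‖x‖^2 := by
    have h1 : Real.sqrt (2*sbar/m) ≤ ‖x‖ := by linarith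
    nlinarith [Real.sq_sqrt (show (0:ℝ) ≤ 2*sbar/m by positivity),
      Real.sqrt_nonneg (2*sbar/m)]
  have hssbar : sbar ≤ sdiag a x := by
    have h2 : m/2*(2*sbar/m) = sbar := by field_simp
    nlinarith
  have hs0 : 0 < sdiag a x := lt_of_lt_of_le hsbar hssbar
  set s := sdiag a x with hsdef
  have hIioc : IntegrableOn (fun t => Real.sqrt (1 + α/t) - 1 - α/(2*t)) (Set.Ioc sbar s) :=
    (OmegaAux.g_integrableOn hα hsbar).mono_set Set.Ioc_subset_Ioi_self
  have hIs : IntegrableOn (fun t => Real.sqrt (1 + α/t) - 1 - α/(2*t)) (Set.Ioi s) :=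
    OmegaAux.g_integrableOn hα hs0
  have hsplit : (∫ t in Set.Ioi sbar, (Real.sqrt (1 + α/t) - 1 - α/(2*t)))
      = (∫ t in Set.Ioc sbar s, (Real.sqrt (1 + α/t) - 1 - α/(2*t)))
        + ∫ t in Set.Ioi s, (Real.sqrt (1 + α/t) - 1 - α/(2*t)) := by
    rw [← Set.Ioc_union_Ioi_eq_Ioi hssbar]
    exact MeasureTheory.setIntegral_union (Set.Ioc_disjoint_Ioi le_rfl)
      measurableSet_Ioi hIioc hIs
  have hval := OmegaAux.interval_val hα hsbar hssbar
  have key : omegaA β sbar (fun s => Real.sqrt (1 + α / s)) a x -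
      (s + α / 2 * Real.log s +
        (β - sbar - α / 2 * Real.log sbar +
          ∫ t in Set.Ioi sbar, (Real.sqrt (1 + α / t) - 1 - α / (2 * t))))
      = - ∫ t in Set.Ioi s, (Real.sqrt (1 + α/t) - 1 - α/(2*t)) := by
    simp only [omegaA, ← hsdef]
    rw [hval, hsplit]; ring
  rw [key, abs_neg]
  have hfin : α^2/(8*s) ≤ α^2/(4*m) * ‖x‖^(-2:ℝ) := by
    have hx2 : ‖x‖ ^ (-2:ℝ) = (‖x‖^2)⁻¹ := by
      rw [show ((-2:ℝ)) = -(2:ℕ) by norm_num, Real.rpow_neg hxn.le, Real.rpow_natCast]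
    rw [hx2, show α^2/(4*m) * (‖x‖^2)⁻¹ = α^2/(4*m*‖x‖^2) by ring]
    have hd : 0 < 4*m*‖x‖^2 := by positivity
    apply div_le_div_of_nonneg_left (by positivity) (by positivity) ?_
    · nlinarith
  exact (OmegaAux.tail_bound hα hs0).trans hfin
end

section
/- Let 1 ≤ l < k ≤ n be integers and let H > h ≥ 0 be real numbers; set ℋ := (k−l)/(2(H−h)). Then for every α > 0: (1) for each s > 0 there exists a unique real number v_α(s) > 1 satisfying (v_α(s)^{k−l} − 1) v_α(s)^{2ℋh} = α s^{−ℋ}; (2) the function s ↦ v_α(s) is differentiable on (0,∞) and satisfies (v_α'/v_α)(H v_α^{2ℋH} − h v_α^{2ℋh}) = −α/(2 s^{1+ℋ}), and in particular v_α'(s) < 0 for all s > 0; (3) v_α(s) → 1 as s → ∞, and v_α(s) − 1 = O(s^{−ℋ}) as s → ∞; (4) for each fixed s > 0, α ↦ v_α(s) is strictly increasing, with ∂v_α(s)/∂α = s^{−ℋ} / (2ℋ(H v_α^{2ℋH−1} − h v_α^{2ℋh−1})) > 0. -/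
open scoped BigOperators
open Filter MeasureTheory Set

/-!
With `p = 2ℋH` and `q = 2ℋh` we have `p - q = k - l ≥ 1`, and the defining equation of
`v_α(s)` reads `F(v) = α s^{-ℋ}` for `F(v) = v^p - v^q` (`rpowSub p q`). Since `q ≥ 0`,
`F' > 0` on `[1, ∞)`, `F(1) = 0` and `F(v) ≥ v - 1`, so `F` is an increasing bijection
`(1, ∞) → (0, ∞)`; hence `v_α(s) = F⁻¹(α s^{-ℋ})`. Everything else follows from the inverse
function theorem applied to `F⁻¹` and the chain rule, and from the bound
`1 < v_α(s) ≤ 1 + α s^{-ℋ}`.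
-/

noncomputable def rpowSub (p q v : ℝ) : ℝ := v ^ p - v ^ q

section rpowSub

variable {p q v : ℝ}

@[simp] lemma rpowSub_one : rpowSub p q 1 = 0 := by simp [rpowSub]

lemma hasDerivAt_rpowSub (hv : 0 < v) :
    HasDerivAt (rpowSub p q) (p * v ^ (p - 1) - q * v ^ (q - 1)) v :=
  (Real.hasDerivAt_rpow_const (Or.inl hv.ne')).sub (Real.hasDerivAt_rpow_const (Or.inl hv.ne'))

lemma rpowSub_deriv_pos (hq : 0 ≤ q) (hqp : q < p) (hv : 1 ≤ v) :
    0 < p * v ^ (p - 1) - q * v ^ (q - 1) := by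
  have hpos : 0 < v ^ (q - 1) := Real.rpow_pos_of_pos (zero_lt_one.trans_le hv) _
  have hle : v ^ (q - 1) ≤ v ^ (p - 1) := Real.rpow_le_rpow_of_exponent_le hv (by linarith)
  refine sub_pos.2 ?_
  calc q * v ^ (q - 1) < p * v ^ (q - 1) := mul_lt_mul_of_pos_right hqp hpos
    _ ≤ p * v ^ (p - 1) := mul_le_mul_of_nonneg_left hle (by linarith)

lemma rpowSub_deriv_eq (c H h : ℝ) (hv : 0 < v) :
    2 * c * H * v ^ (2 * c * H - 1) - 2 * c * h * v ^ (2 * c * h - 1) =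
      2 * c * (H * v ^ (2 * c * H) - h * v ^ (2 * c * h)) / v := by
  rw [Real.rpow_sub_one hv.ne', Real.rpow_sub_one hv.ne']
  field_simp

lemma strictMonoOn_rpowSub (hq : 0 ≤ q) (hqp : q < p) : StrictMonoOn (rpowSub p q) (Ici 1) :=
  strictMonoOn_of_deriv_pos (convex_Ici 1)
    (fun v hv => (hasDerivAt_rpowSub (zero_lt_one.trans_le hv)).continuousAt.continuousWithinAt)
    fun v hv => by
      rw [interior_Ici] at hv
      rw [(hasDerivAt_rpowSub (zero_lt_one.trans hv)).deriv]
      exact rpowSub_deriv_pos hq hqp hv.le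

lemma mapsTo_rpowSub (hq : 0 ≤ q) (hqp : q < p) : MapsTo (rpowSub p q) (Ioi 1) (Ioi 0) :=
  fun v hv => by
    simpa using strictMonoOn_rpowSub hq hqp (mem_Ici.2 le_rfl) (mem_Ici.2 hv.le) hv

lemma sub_one_le_rpowSub (hq : 0 ≤ q) (hp : q + 1 ≤ p) (hv : 1 ≤ v) : v - 1 ≤ rpowSub p q v := by
  have hvq : 1 ≤ v ^ q := Real.one_le_rpow hv hq
  have hvp : v ^ q * v ≤ v ^ p := by
    rw [← Real.rpow_add_one (zero_lt_one.trans_le hv).ne']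
    exact Real.rpow_le_rpow_of_exponent_le hv hp
  calc v - 1 ≤ v ^ q * (v - 1) := le_mul_of_one_le_left (by linarith) hvq
    _ ≤ rpowSub p q v := by rw [rpowSub]; linarith

lemma existsUnique_rpowSub_eq (hq : 0 ≤ q) (hp : q + 1 ≤ p) {y : ℝ} (hy : 0 < y) :
    ∃! v, 1 < v ∧ rpowSub p q v = y := by
  have hmono := strictMonoOn_rpowSub hq (by linarith : q < p)
  have hcont : ContinuousOn (rpowSub p q) (Icc 1 (y + 1)) := fun v hv =>
    (hasDerivAt_rpowSub (zero_lt_one.trans_le hv.1)).continuousAt.continuousWithinAt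
  have hy_mem : y ∈ Icc (rpowSub p q 1) (rpowSub p q (y + 1)) :=
    ⟨by simpa using hy.le, by linarith [sub_one_le_rpowSub hq hp (v := y + 1) (by linarith)]⟩
  obtain ⟨v, hv, hvy⟩ := intermediate_value_Icc (by linarith) hcont hy_mem
  have hv1 : 1 < v := lt_of_le_of_ne hv.1 (by rintro rfl; simp at hvy; linarith)
  refine ⟨v, ⟨hv1, hvy⟩, fun w ⟨hw1, hwy⟩ => ?_⟩
  exact hmono.injOn (mem_Ici.2 hw1.le) (mem_Ici.2 hv1.le) (hwy.trans hvy.symm)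

end rpowSub

section RightInvOn

variable {F g : ℝ → ℝ} {s t : Set ℝ}

lemma StrictMonoOn.strictMonoOn_of_rightInvOn (hF : StrictMonoOn F s) (hg : MapsTo g t s)
    (hinv : RightInvOn g F t) : StrictMonoOn g t := fun _ hy _ hz hyz =>
  (hF.lt_iff_lt (hg hy) (hg hz)).1 (by rwa [hinv hy, hinv hz])

lemma Set.InjOn.image_eq_of_rightInvOn (hF : InjOn F s) (hFst : MapsTo F s t) (hg : MapsTo g t s)
    (hinv : RightInvOn g F t) : g '' t = s :=
  (InvOn.bijOn ⟨hinv, hF.rightInvOn_of_leftInvOn hinv hFst hg⟩ hg hFst).image_eq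

lemma StrictMonoOn.hasDerivAt_of_rightInvOn (hF : StrictMonoOn F s) (hs : IsOpen s)
    (ht : IsOpen t) (hFst : MapsTo F s t) (hg : MapsTo g t s) (hinv : RightInvOn g F t)
    {y F' : ℝ} (hy : y ∈ t) (hF' : HasDerivAt F F' (g y)) (hF'0 : F' ≠ 0) :
    HasDerivAt g F'⁻¹ y := by
  have hcont : ContinuousAt g y :=
    continuousAt_of_monotoneOn_of_image_mem_nhds
      (hF.strictMonoOn_of_rightInvOn hg hinv).monotoneOn (ht.mem_nhds hy)
      (by rw [hF.injOn.image_eq_of_rightInvOn hFst hg hinv]; exact hs.mem_nhds (hg hy))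
  exact hF'.of_local_left_inverse hcont hF'0 (eventually_of_mem (ht.mem_nhds hy) hinv)

end RightInvOn

def IsRpowSubSol (p q c : ℝ) (V : ℝ → ℝ → ℝ) : Prop :=
  ∀ α, 0 < α → ∀ s, 0 < s → 1 < V α s ∧ rpowSub p q (V α s) = α * s ^ (-c)

namespace IsRpowSubSol

variable {p q c H h α s : ℝ} {V : ℝ → ℝ → ℝ}

/-- Reduces `V` to the single function `y ↦ V y 1`, the inverse of `rpowSub p q` on `(0, ∞)`. -/
lemma eq_apply_one (hV : IsRpowSubSol p q c V) (hq : 0 ≤ q) (hqp : q < p) (hα : 0 < α)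
    (hs : 0 < s) : V α s = V (α * s ^ (-c)) 1 := by
  have hy : 0 < α * s ^ (-c) := mul_pos hα (Real.rpow_pos_of_pos hs _)
  obtain ⟨h1, hF1⟩ := hV α hα s hs
  obtain ⟨h2, hF2⟩ := hV _ hy 1 one_pos
  refine (strictMonoOn_rpowSub hq hqp).injOn (mem_Ici.2 h1.le) (mem_Ici.2 h2.le) ?_
  rw [hF1, hF2, Real.one_rpow, mul_one]

lemma hasDerivAt_apply_one (hV : IsRpowSubSol p q c V) (hq : 0 ≤ q) (hqp : q < p) {y : ℝ}
    (hy : 0 < y) :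
    HasDerivAt (fun y => V y 1) (p * V y 1 ^ (p - 1) - q * V y 1 ^ (q - 1))⁻¹ y := by
  have hinv : RightInvOn (fun y => V y 1) (rpowSub p q) (Ioi 0) := fun y hy => by
    simpa using (hV y hy 1 one_pos).2
  have hv := (hV y hy 1 one_pos).1
  exact ((strictMonoOn_rpowSub hq hqp).mono Ioi_subset_Ici_self).hasDerivAt_of_rightInvOn
    isOpen_Ioi isOpen_Ioi (mapsTo_rpowSub hq hqp) (fun y hy => (hV y hy 1 one_pos).1) hinv hy
    (hasDerivAt_rpowSub (zero_lt_one.trans hv)) (rpowSub_deriv_pos hq hqp hv.le).ne'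

lemma hasDerivAt_right (hV : IsRpowSubSol p q c V) (hq : 0 ≤ q) (hqp : q < p) (hα : 0 < α)
    (hs : 0 < s) :
    HasDerivAt (V α)
      ((p * V α s ^ (p - 1) - q * V α s ^ (q - 1))⁻¹ * (α * (-c * s ^ (-c - 1)))) s := by
  have hy : 0 < α * s ^ (-c) := mul_pos hα (Real.rpow_pos_of_pos hs _)
  have hcomp := (hV.hasDerivAt_apply_one hq hqp hy).comp s
    ((Real.hasDerivAt_rpow_const (p := -c) (Or.inl hs.ne')).const_mul α)
  rw [← hV.eq_apply_one hq hqp hα hs] at hcomp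
  exact hcomp.congr_of_eventuallyEq <| eventually_of_mem (Ioi_mem_nhds hs) fun t ht =>
    hV.eq_apply_one hq hqp hα ht

lemma hasDerivAt_left (hV : IsRpowSubSol p q c V) (hq : 0 ≤ q) (hqp : q < p) (hα : 0 < α)
    (hs : 0 < s) :
    HasDerivAt (fun β => V β s) ((p * V α s ^ (p - 1) - q * V α s ^ (q - 1))⁻¹ * s ^ (-c)) α := by
  have hy : 0 < α * s ^ (-c) := mul_pos hα (Real.rpow_pos_of_pos hs _)
  have hcomp := (hV.hasDerivAt_apply_one hq hqp hy).comp α (hasDerivAt_mul_const (s ^ (-c)))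
  rw [← hV.eq_apply_one hq hqp hα hs] at hcomp
  exact hcomp.congr_of_eventuallyEq <| eventually_of_mem (Ioi_mem_nhds hα) fun β hβ =>
    hV.eq_apply_one hq hqp hβ hs

lemma strictMonoOn_left (hV : IsRpowSubSol p q c V) (hq : 0 ≤ q) (hqp : q < p) (hs : 0 < s) :
    StrictMonoOn (fun β => V β s) (Ioi 0) := fun β hβ γ hγ hβγ => by
  have hsc : 0 < s ^ (-c) := Real.rpow_pos_of_pos hs _
  obtain ⟨hβ1, hFβ⟩ := hV β hβ s hs
  obtain ⟨hγ1, hFγ⟩ := hV γ hγ s hs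
  refine ((strictMonoOn_rpowSub hq hqp).lt_iff_lt (mem_Ici.2 hβ1.le) (mem_Ici.2 hγ1.le)).1 ?_
  rw [hFβ, hFγ]
  exact mul_lt_mul_of_pos_right hβγ hsc

lemma sub_one_le (hV : IsRpowSubSol p q c V) (hq : 0 ≤ q) (hp : q + 1 ≤ p) (hα : 0 < α)
    (hs : 0 < s) : V α s - 1 ≤ α * s ^ (-c) := by
  obtain ⟨h1, hF⟩ := hV α hα s hs
  exact hF ▸ sub_one_le_rpowSub hq hp h1.le

lemma tendsto_atTop (hV : IsRpowSubSol p q c V) (hq : 0 ≤ q) (hp : q + 1 ≤ p) (hc : 0 < c)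
    (hα : 0 < α) : Tendsto (V α) atTop (nhds 1) := by
  have hupper : Tendsto (fun s => 1 + α * s ^ (-c)) atTop (nhds 1) := by
    simpa using ((tendsto_rpow_neg_atTop hc).const_mul α).const_add 1
  refine tendsto_of_tendsto_of_tendsto_of_le_of_le' tendsto_const_nhds hupper ?_ ?_
  · filter_upwards [eventually_gt_atTop 0] with s hs using (hV α hα s hs).1.le
  · filter_upwards [eventually_gt_atTop 0] with s hs
    linarith [hV.sub_one_le hq hp hα hs]

lemma exists_hasDerivAt_right_neg (hV : IsRpowSubSol (2 * c * H) (2 * c * h) c V) (hc : 0 < c)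
    (hh : 0 ≤ h) (hHh : h < H) (hα : 0 < α) (hs : 0 < s) :
    ∃ d, HasDerivAt (V α) d s ∧ d < 0 ∧
      d / V α s * (H * V α s ^ (2 * c * H) - h * V α s ^ (2 * c * h)) =
        -(α / (2 * s ^ (1 + c))) := by
  have hq : 0 ≤ 2 * c * h := by positivity
  have hqp : 2 * c * h < 2 * c * H := by gcongr
  have hv1 := (hV α hα s hs).1
  have hv : 0 < V α s := zero_lt_one.trans hv1
  have hF' := rpowSub_deriv_pos hq hqp hv1.le
  have hsc : 0 < s ^ (-c - 1) := Real.rpow_pos_of_pos hs _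
  refine ⟨_, hV.hasDerivAt_right hq hqp hα hs,
    mul_neg_of_pos_of_neg (inv_pos.2 hF') (mul_neg_of_pos_of_neg hα (by nlinarith)), ?_⟩
  rw [rpowSub_deriv_eq c H h hv] at hF' ⊢
  have hX : 0 < H * V α s ^ (2 * c * H) - h * V α s ^ (2 * c * h) :=
    pos_of_mul_pos_right ((div_pos_iff_of_pos_right hv).1 hF') (by positivity)
  rw [show -c - 1 = -(1 + c) by ring, Real.rpow_neg hs.le]
  field_simp

lemma hasDerivAt_left_pos (hV : IsRpowSubSol (2 * c * H) (2 * c * h) c V)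
    (hc : 0 < c) (hh : 0 ≤ h) (hHh : h < H) (hα : 0 < α) (hs : 0 < s) :
    HasDerivAt (fun β => V β s)
        (s ^ (-c) / (2 * c * (H * V α s ^ (2 * c * H - 1) - h * V α s ^ (2 * c * h - 1)))) α ∧
      0 < s ^ (-c) / (2 * c * (H * V α s ^ (2 * c * H - 1) - h * V α s ^ (2 * c * h - 1))) := by
  have hq : 0 ≤ 2 * c * h := by positivity
  have hqp : 2 * c * h < 2 * c * H := by gcongr
  have hden : 2 * c * H * V α s ^ (2 * c * H - 1) - 2 * c * h * V α s ^ (2 * c * h - 1) =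
      2 * c * (H * V α s ^ (2 * c * H - 1) - h * V α s ^ (2 * c * h - 1)) := by ring
  have hF' := hden ▸ rpowSub_deriv_pos hq hqp (hV α hα s hs).1.le
  refine ⟨?_, div_pos (Real.rpow_pos_of_pos hs _) hF'⟩
  convert hV.hasDerivAt_left hq hqp hα hs using 1
  rw [hden, div_eq_inv_mul]

end IsRpowSubSol

section calH

variable {k l : ℕ} {H h : ℝ}

lemma calH_pos (hlk : l < k) (hHh : h < H) : 0 < calH k l H h :=
  div_pos (sub_pos.2 (Nat.cast_lt.2 hlk)) (by linarith)

lemma two_mul_calH_mul_eq (hlk : l < k) (hHh : h < H) :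
    2 * calH k l H h * H = 2 * calH k l H h * h + ((k - l : ℕ) : ℝ) := by
  have : H - h ≠ 0 := by linarith
  rw [calH, Nat.cast_sub hlk.le]
  field_simp
  ring

lemma pow_sub_one_mul_rpow_eq_rpowSub (hlk : l < k) (hHh : h < H) {v : ℝ} (hv : 0 < v) :
    (v ^ (k - l) - 1) * v ^ (2 * calH k l H h * h) =
      rpowSub (2 * calH k l H h * H) (2 * calH k l H h * h) v := by
  rw [two_mul_calH_mul_eq hlk hHh, rpowSub, Real.rpow_add hv, Real.rpow_natCast]
  ring

lemma isRpowSubSol_of_isVsol (hlk : l < k) (hHh : h < H) {V : ℝ → ℝ → ℝ}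
    (hV : ∀ α : ℝ, 0 < α → IsVsol k l H h α (V α)) :
    IsRpowSubSol (2 * calH k l H h * H) (2 * calH k l H h * h) (calH k l H h) V :=
  fun α hα s hs => by
    obtain ⟨h1, hF⟩ := hV α hα s hs
    exact ⟨h1, pow_sub_one_mul_rpow_eq_rpowSub hlk hHh (zero_lt_one.trans h1) ▸ hF⟩

end calH

theorem v_alpha_properties_general
    (k l : ℕ) (hlk : l < k)
    (H h : ℝ) (hh : 0 ≤ h) (hHh : h < H)
    (V : ℝ → ℝ → ℝ) (hV : ∀ α : ℝ, 0 < α → IsVsol k l H h α (V α)) :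
    ∀ α : ℝ, 0 < α →
      -- (1) existence and uniqueness of `v_α(s)`
      (∀ s : ℝ, 0 < s → ∃! v : ℝ, 1 < v ∧
        (v ^ (k - l) - 1) * v ^ (2 * calH k l H h * h) = α * s ^ (-calH k l H h)) ∧
      -- (2) differentiability and the derivative identity; in particular `v_α' < 0`
      (∀ s : ℝ, 0 < s → ∃ d : ℝ, HasDerivAt (V α) d s ∧ d < 0 ∧
        d / V α s * (H * V α s ^ (2 * calH k l H h * H) - h * V α s ^ (2 * calH k l H h * h)) =
          -(α / (2 * s ^ (1 + calH k l H h)))) ∧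
      -- (3) `v_α(s) → 1` and `v_α(s) − 1 = O(s^{−ℋ})` as `s → ∞`
      (Tendsto (V α) atTop (nhds 1) ∧
        ∃ C S : ℝ, 0 < C ∧ 0 < S ∧ ∀ s : ℝ, S ≤ s →
          |V α s - 1| ≤ C * s ^ (-calH k l H h)) ∧
      -- (4) strict monotonicity in `α` and the formula for `∂v_α/∂α`
      (∀ s : ℝ, 0 < s →
        StrictMonoOn (fun α' => V α' s) (Set.Ioi (0 : ℝ)) ∧
        HasDerivAt (fun α' => V α' s)
          (s ^ (-calH k l H h) /
            (2 * calH k l H h *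
              (H * V α s ^ (2 * calH k l H h * H - 1) -
                h * V α s ^ (2 * calH k l H h * h - 1)))) α ∧
        0 < s ^ (-calH k l H h) /
          (2 * calH k l H h *
            (H * V α s ^ (2 * calH k l H h * H - 1) -
              h * V α s ^ (2 * calH k l H h * h - 1)))) := by
  intro α hα
  have hV' := isRpowSubSol_of_isVsol hlk hHh hV
  set ℋ := calH k l H h
  have hℋ : 0 < ℋ := calH_pos hlk hHh
  have hq : 0 ≤ 2 * ℋ * h := by positivity
  have hp : 2 * ℋ * h + 1 ≤ 2 * ℋ * H := by
    have : (1 : ℝ) ≤ ((k - l : ℕ) : ℝ) := by exact_mod_cast Nat.sub_pos_of_lt hlk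
    linarith [two_mul_calH_mul_eq hlk hHh]
  refine ⟨fun s hs => ?_, fun s hs => hV'.exists_hasDerivAt_right_neg hℋ hh hHh hα hs,
    ⟨hV'.tendsto_atTop hq hp hℋ hα, α, 1, hα, one_pos, fun s hs => ?_⟩,
    fun s hs => ⟨hV'.strictMonoOn_left hq (by linarith) hs,
      hV'.hasDerivAt_left_pos hℋ hh hHh hα hs⟩⟩
  · obtain ⟨v, ⟨hv1, hvF⟩, huniq⟩ :=
      existsUnique_rpowSub_eq hq hp (mul_pos hα (Real.rpow_pos_of_pos hs (-ℋ)))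
    have hF {w : ℝ} (hw : 1 < w) := pow_sub_one_mul_rpow_eq_rpowSub hlk hHh (zero_lt_one.trans hw)
    exact ⟨v, ⟨hv1, (hF hv1).trans hvF⟩, fun w ⟨hw1, hwF⟩ => huniq w ⟨hw1, (hF hw1).symm.trans hwF⟩⟩
  · have hs0 : 0 < s := one_pos.trans_le hs
    rw [abs_of_nonneg (by linarith [(hV' α hα s hs0).1])]
    exact hV'.sub_one_le hq hp hα hs0

/-- Existence, uniqueness and basic properties of `v_α` (equations (2.9)–(2.12) of the paper). -/
theorem v_alpha_properties
    (n k l : ℕ) (hl1 : 1 ≤ l) (hlk : l < k) (hkn : k ≤ n)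
    (H h : ℝ) (hh : 0 ≤ h) (hHh : h < H)
    (V : ℝ → ℝ → ℝ) (hV : ∀ α : ℝ, 0 < α → IsVsol k l H h α (V α)) :
    ∀ α : ℝ, 0 < α →
      -- (1) existence and uniqueness of `v_α(s)`
      (∀ s : ℝ, 0 < s → ∃! v : ℝ, 1 < v ∧
        (v ^ (k - l) - 1) * v ^ (2 * calH k l H h * h) = α * s ^ (-calH k l H h)) ∧
      -- (2) differentiability and the derivative identity; in particular `v_α' < 0`
      (∀ s : ℝ, 0 < s → ∃ d : ℝ, HasDerivAt (V α) d s ∧ d < 0 ∧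
        d / V α s * (H * V α s ^ (2 * calH k l H h * H) - h * V α s ^ (2 * calH k l H h * h)) =
          -(α / (2 * s ^ (1 + calH k l H h)))) ∧
      -- (3) `v_α(s) → 1` and `v_α(s) − 1 = O(s^{−ℋ})` as `s → ∞`
      (Tendsto (V α) atTop (nhds 1) ∧
        ∃ C S : ℝ, 0 < C ∧ 0 < S ∧ ∀ s : ℝ, S ≤ s →
          |V α s - 1| ≤ C * s ^ (-calH k l H h)) ∧
      -- (4) strict monotonicity in `α` and the formula for `∂v_α/∂α`
      (∀ s : ℝ, 0 < s →
        StrictMonoOn (fun α' => V α' s) (Set.Ioi (0 : ℝ)) ∧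
        HasDerivAt (fun α' => V α' s)
          (s ^ (-calH k l H h) /
            (2 * calH k l H h *
              (H * V α s ^ (2 * calH k l H h * H - 1) -
                h * V α s ^ (2 * calH k l H h * h - 1)))) α ∧
        0 < s ^ (-calH k l H h) /
          (2 * calH k l H h *
            (H * V α s ^ (2 * calH k l H h * H - 1) -
              h * V α s ^ (2 * calH k l H h * h - 1)))) :=
  v_alpha_properties_general k l hlk H h hh hHh V hV
end

section
/- Let 1 ≤ l < k ≤ n be integers and let H > h ≥ 0 be real numbers with H − h < (k−l)/2; set ℋ := (k−l)/(2(H−h)) (so ℋ > 1). Fix β ∈ ℝ and s̄ > 0, and for α > 0 define μ₁(α) := β − s̄ + ∫_{s̄}^∞ (v_α(t) − 1) dt. Then: (1) the integral ∫_{s̄}^∞ (v_α(t) − 1) dt converges, so μ₁(α) < ∞; (2) μ₁ is strictly increasing on (0,∞); (3) lim_{α→∞} μ₁(α) = ∞; (4) ω_α(s) := β + ∫_{s̄}^s v_α(t) dt satisfies ω_α(s) = s + μ₁(α) + O(s^{1−ℋ}) as s → ∞. -/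
open scoped BigOperators
open Filter MeasureTheory Set

/-!
For `v > 1` the profile `F(v) = (v^m − 1) v^e` is positive and strictly increasing, and it
dominates `v − 1`. Hence `v_α(s) − 1 ≤ α s^{−ℋ}`, which is integrable at infinity because
`ℋ > 1` and bounds the tail `∫_s^∞ (v_α − 1) ≤ α s^{1−ℋ}/(ℋ − 1)`; this gives (1) and (4).
Since `F` is strictly increasing, `v_α(s)` is antitone in `s` and strictly increasing in `α`,
which gives (2), and `v_α(s) → ∞` as `α → ∞` because `F(v_α(s)) = α s^{−ℋ}`, which gives (3).
-/

/-- The profile `F(v) = (v^m − 1) v^e`; the paper's `v_α(s)` solves `F(v) = α s^{−ℋ}` with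
`m = k − l` and `e = 2ℋh`. -/
noncomputable def profile (m : ℕ) (e v : ℝ) : ℝ := (v ^ m - 1) * v ^ e

def SolvesProfileEq (m : ℕ) (e p α : ℝ) (v : ℝ → ℝ) : Prop :=
  ∀ s : ℝ, 0 < s → 1 < v s ∧ profile m e (v s) = α * s ^ (-p)

section Profile

variable {m : ℕ} {e p α : ℝ} {v : ℝ → ℝ}

lemma strictMonoOn_profile (hm : m ≠ 0) (he : 0 ≤ e) : StrictMonoOn (profile m e) (Ici 1) := by
  intro x (hx : 1 ≤ x) y (hy : 1 ≤ y) hxy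
  have hx0 : 0 < x := one_pos.trans_le hx
  have hxm : 1 ≤ x ^ m := one_le_pow₀ hx
  have hxym : x ^ m < y ^ m := pow_lt_pow_left₀ hxy hx0.le hm
  calc (x ^ m - 1) * x ^ e ≤ (x ^ m - 1) * y ^ e := by gcongr
    _ < (y ^ m - 1) * y ^ e := by gcongr

lemma sub_one_le_profile (hm : m ≠ 0) (he : 0 ≤ e) {x : ℝ} (hx : 1 ≤ x) :
    x - 1 ≤ profile m e x :=
  calc x - 1 ≤ x ^ m - 1 := by linarith [le_self_pow₀ hx hm]
    _ ≤ (x ^ m - 1) * x ^ e :=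
        le_mul_of_one_le_right (by linarith [one_le_pow₀ (n := m) hx])
          (Real.one_le_rpow hx he)

namespace SolvesProfileEq

lemma lt_apply_iff (hv : SolvesProfileEq m e p α v) (hm : m ≠ 0) (he : 0 ≤ e) {s M : ℝ}
    (hs : 0 < s) (hM : 1 ≤ M) : M < v s ↔ profile m e M < α * s ^ (-p) := by
  rw [← (hv s hs).2]
  exact ((strictMonoOn_profile hm he).lt_iff_lt hM (hv s hs).1.le).symm

lemma sub_one_le (hv : SolvesProfileEq m e p α v) (hm : m ≠ 0) (he : 0 ≤ e) {s : ℝ}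
    (hs : 0 < s) : v s - 1 ≤ α * s ^ (-p) :=
  (hv s hs).2 ▸ sub_one_le_profile hm he (hv s hs).1.le

lemma param_pos (hv : SolvesProfileEq m e p α v) (hm : m ≠ 0) : 0 < α := by
  obtain ⟨hv1, hF⟩ := hv 1 one_pos
  rw [Real.one_rpow, mul_one] at hF
  rw [← hF, profile]
  have : 1 < v 1 ^ m := one_lt_pow₀ hv1 hm
  exact mul_pos (by linarith) (Real.rpow_pos_of_pos (one_pos.trans hv1) e)

lemma antitoneOn (hv : SolvesProfileEq m e p α v) (hm : m ≠ 0) (he : 0 ≤ e) (hp : 0 ≤ p) :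
    AntitoneOn v (Ioi 0) := by
  intro s (hs : 0 < s) t (ht : 0 < t) hst
  rw [← not_lt, hv.lt_apply_iff hm he ht (hv s hs).1.le, (hv s hs).2, not_lt]
  exact mul_le_mul_of_nonneg_left (Real.rpow_le_rpow_of_nonpos hs hst (neg_nonpos.2 hp))
    (hv.param_pos hm).le

lemma apply_lt_apply {α' : ℝ} {v' : ℝ → ℝ} (hv : SolvesProfileEq m e p α v)
    (hv' : SolvesProfileEq m e p α' v') (hm : m ≠ 0) (he : 0 ≤ e) (hαα' : α < α') {s : ℝ}
    (hs : 0 < s) : v s < v' s := by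
  rw [hv'.lt_apply_iff hm he hs (hv s hs).1.le, (hv s hs).2]
  exact mul_lt_mul_of_pos_right hαα' (Real.rpow_pos_of_pos hs _)

lemma integrableOn_sub_one (hv : SolvesProfileEq m e p α v) (hm : m ≠ 0) (he : 0 ≤ e)
    (hp : 1 < p) {a : ℝ} (ha : 0 < a) : IntegrableOn (fun t => v t - 1) (Ioi a) := by
  have hmeas : AEStronglyMeasurable (fun t => v t - 1) (volume.restrict (Ioi a)) :=
    ((aemeasurable_restrict_of_antitoneOn measurableSet_Ioi
      ((hv.antitoneOn hm he (by linarith)).mono (Ioi_subset_Ioi ha.le))).sub_const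
        1).aestronglyMeasurable
  refine ((integrableOn_Ioi_rpow_of_lt (show -p < -1 by linarith) ha).const_mul α).mono'
    hmeas ?_
  filter_upwards [ae_restrict_mem measurableSet_Ioi] with t (ht : a < t)
  have ht0 : 0 < t := ha.trans ht
  rw [Real.norm_of_nonneg (by linarith [(hv t ht0).1])]
  exact hv.sub_one_le hm he ht0

lemma abs_setIntegral_Ioi_sub_one_le (hv : SolvesProfileEq m e p α v) (hm : m ≠ 0)
    (he : 0 ≤ e) (hp : 1 < p) {s : ℝ} (hs : 0 < s) :
    |∫ t in Ioi s, (v t - 1)| ≤ α / (p - 1) * s ^ (1 - p) := by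
  have hnonneg : 0 ≤ ∫ t in Ioi s, (v t - 1) :=
    setIntegral_nonneg measurableSet_Ioi fun t (ht : s < t) => by
      linarith [(hv t (hs.trans ht)).1]
  have hpower : ∫ t in Ioi s, α * t ^ (-p) = α / (p - 1) * s ^ (1 - p) := by
    rw [integral_const_mul, integral_Ioi_rpow_of_lt (by linarith) hs,
      show -p + 1 = 1 - p by ring]
    field_simp [show p - 1 ≠ 0 by linarith, show 1 - p ≠ 0 by linarith]
    ring
  rw [abs_of_nonneg hnonneg, ← hpower]
  exact setIntegral_mono_on (hv.integrableOn_sub_one hm he hp hs)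
    ((integrableOn_Ioi_rpow_of_lt (by linarith) hs).const_mul α) measurableSet_Ioi
    fun t (ht : s < t) => hv.sub_one_le hm he (hs.trans ht)

/-- Lower bound by the integral over `(a, a + 1]`, where `v ≥ v (a + 1)`. -/
lemma apply_add_one_sub_one_le_setIntegral (hv : SolvesProfileEq m e p α v) (hm : m ≠ 0)
    (he : 0 ≤ e) (hp : 1 < p) {a : ℝ} (ha : 0 < a) :
    v (a + 1) - 1 ≤ ∫ t in Ioi a, (v t - 1) := by
  have hint := hv.integrableOn_sub_one hm he hp ha
  calc v (a + 1) - 1 = ∫ _ in Ioc a (a + 1), (v (a + 1) - 1) := by simp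
    _ ≤ ∫ t in Ioc a (a + 1), (v t - 1) :=
        setIntegral_mono_on (integrableOn_const measure_Ioc_lt_top.ne)
          (hint.mono_set Ioc_subset_Ioi_self) measurableSet_Ioc fun t ht => by
            have := hv.antitoneOn hm he (by linarith) (ha.trans ht.1)
              (show 0 < a + 1 by linarith) ht.2
            linarith
    _ ≤ ∫ t in Ioi a, (v t - 1) :=
        setIntegral_mono_set hint
          (by filter_upwards [ae_restrict_mem measurableSet_Ioi] with t (ht : a < t)
              exact sub_nonneg.2 (hv t (ha.trans ht)).1.le)
          Ioc_subset_Ioi_self.eventuallyLE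

end SolvesProfileEq

lemma tendsto_apply_atTop_of_solvesProfileEq {V : ℝ → ℝ → ℝ}
    (hV : ∀ α, 0 < α → SolvesProfileEq m e p α (V α)) (hm : m ≠ 0) (he : 0 ≤ e) {s : ℝ}
    (hs : 0 < s) : Tendsto (fun α => V α s) atTop atTop := by
  rw [tendsto_atTop]
  intro b
  have hM : 1 ≤ max b 1 := le_max_right b 1
  filter_upwards [eventually_gt_atTop (max 0 (profile m e (max b 1) * s ^ p))] with α hα
  have hα0 : 0 < α := (le_max_left _ _).trans_lt hα
  refine (le_max_left b 1).trans ((hV α hα0).lt_apply_iff hm he hs hM |>.2 ?_).le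
  rw [Real.rpow_neg hs.le, ← div_eq_mul_inv, lt_div_iff₀ (Real.rpow_pos_of_pos hs p)]
  exact (le_max_right _ _).trans_lt hα

end Profile

lemma setIntegral_Ioi_lt_setIntegral_Ioi {f g : ℝ → ℝ} {a : ℝ} (hf : IntegrableOn f (Ioi a))
    (hg : IntegrableOn g (Ioi a)) (hfg : ∀ t ∈ Ioi a, f t < g t) :
    ∫ t in Ioi a, f t < ∫ t in Ioi a, g t := by
  rw [← sub_pos, ← integral_sub hg hf, setIntegral_pos_iff_support_of_nonneg_ae
    (f := fun t => g t - f t)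
    (by filter_upwards [ae_restrict_mem measurableSet_Ioi] with t ht
        exact sub_nonneg.2 (hfg t ht).le) (hg.sub hf)]
  have : Ioi a ⊆ Function.support (fun t => g t - f t) ∩ Ioi a := fun t ht =>
    ⟨sub_ne_zero.2 (hfg t ht).ne', ht⟩
  exact (by simp : (0 : ENNReal) < volume (Ioi a)).trans_le (measure_mono this)

lemma intervalIntegral_eq_sub_add_setIntegral_Ioi_sub_one {f : ℝ → ℝ} {a b : ℝ}
    (hf : IntegrableOn (fun t => f t - 1) (Ioi a)) (hab : a ≤ b) :
    ∫ t in a..b, f t = b - a + ((∫ t in Ioi a, (f t - 1)) - ∫ t in Ioi b, (f t - 1)) := by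
  have hfi : IntervalIntegrable (fun t => f t - 1) volume a b :=
    (intervalIntegrable_iff_integrableOn_Ioc_of_le hab).2 (hf.mono_set Ioc_subset_Ioi_self)
  calc ∫ t in a..b, f t = ∫ t in a..b, ((f t - 1) + 1) := by simp
    _ = _ := by
      rw [intervalIntegral.integral_add hfi intervalIntegrable_const,
        intervalIntegral.integral_Ioi_sub_Ioi hf hab]
      simp only [intervalIntegral.integral_const, smul_eq_mul, mul_one]
      ring

lemma one_lt_calH {k l : ℕ} {H h : ℝ} (hHh : h < H) (hsub : H - h < ((k : ℝ) - l) / 2) :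
    1 < calH k l H h := by
  rw [calH, one_lt_div (by linarith)]
  linarith

theorem mu_one_properties_general
    (k l : ℕ) (hlk : l < k)
    (H h : ℝ) (hh : 0 ≤ h) (hHh : h < H)
    (hsub : H - h < ((k : ℝ) - l) / 2)
    (β sbar : ℝ) (hsbar : 0 < sbar)
    (V : ℝ → ℝ → ℝ) (hV : ∀ α : ℝ, 0 < α → IsVsol k l H h α (V α)) :
    -- (1) convergence of the integral defining μ₁(α)
    (∀ α : ℝ, 0 < α → IntegrableOn (fun t => V α t - 1) (Set.Ioi sbar)) ∧
    -- (2) μ₁ is strictly increasing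
    StrictMonoOn (fun α => β - sbar + ∫ t in Set.Ioi sbar, (V α t - 1)) (Set.Ioi (0 : ℝ)) ∧
    -- (3) μ₁(α) → ∞ as α → ∞
    Tendsto (fun α => β - sbar + ∫ t in Set.Ioi sbar, (V α t - 1)) atTop atTop ∧
    -- (4) ω_α(s) = s + μ₁(α) + O(s^{1−ℋ}) as s → ∞
    (∀ α : ℝ, 0 < α → ∃ C S : ℝ, 0 < C ∧ 0 < S ∧ ∀ s : ℝ, S ≤ s →
      |(β + ∫ t in sbar..s, V α t) -
          (s + (β - sbar + ∫ t in Set.Ioi sbar, (V α t - 1)))| ≤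
        C * s ^ (1 - calH k l H h)) := by
  have hm : k - l ≠ 0 := Nat.sub_ne_zero_of_lt hlk
  have hp : 1 < calH k l H h := one_lt_calH hHh hsub
  have he : 0 ≤ 2 * calH k l H h * h := mul_nonneg (by linarith) hh
  have hV' : ∀ α, 0 < α →
      SolvesProfileEq (k - l) (2 * calH k l H h * h) (calH k l H h) α (V α) := hV
  have hint α (hα : 0 < α) := (hV' α hα).integrableOn_sub_one hm he hp hsbar
  refine ⟨hint, ?_, ?_, ?_⟩
  · intro α (hα : 0 < α) α' (hα' : 0 < α') hαα'
    simpa using setIntegral_Ioi_lt_setIntegral_Ioi (hint α hα) (hint α' hα') fun t ht =>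
      sub_lt_sub_right ((hV' α hα).apply_lt_apply (hV' α' hα') hm he hαα' (hsbar.trans ht)) 1
  · refine tendsto_atTop_mono' _ ?_ <| tendsto_atTop_add_const_left _ (β - sbar) <|
      tendsto_atTop_add_const_right _ (-1) <|
        tendsto_apply_atTop_of_solvesProfileEq hV' hm he (by linarith : 0 < sbar + 1)
    filter_upwards [eventually_gt_atTop 0] with α hα
    linarith [(hV' α hα).apply_add_one_sub_one_le_setIntegral hm he hp hsbar]
  · intro α hα
    refine ⟨α / (calH k l H h - 1), sbar, div_pos hα (by linarith), hsbar, fun s hs => ?_⟩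
    calc _ = |∫ t in Ioi s, (V α t - 1)| := by
          rw [intervalIntegral_eq_sub_add_setIntegral_Ioi_sub_one (hint α hα) hs, ← abs_neg]
          ring_nf
      _ ≤ _ := (hV' α hα).abs_setIntegral_Ioi_sub_one_le hm he hp (hsbar.trans_le hs)

/-- Case 1 of Section 2: when `H − h < (k−l)/2`, the constant `μ₁(α)` is finite,
strictly increasing in `α`, tends to `∞`, and `ω_α(s) = s + μ₁(α) + O(s^{1−ℋ})`. -/
theorem mu_one_properties
    (n k l : ℕ) (hl1 : 1 ≤ l) (hlk : l < k) (hkn : k ≤ n)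
    (H h : ℝ) (hh : 0 ≤ h) (hHh : h < H)
    (hsub : H - h < ((k : ℝ) - l) / 2)
    (β sbar : ℝ) (hsbar : 0 < sbar)
    (V : ℝ → ℝ → ℝ) (hV : ∀ α : ℝ, 0 < α → IsVsol k l H h α (V α)) :
    -- (1) convergence of the integral defining μ₁(α)
    (∀ α : ℝ, 0 < α → IntegrableOn (fun t => V α t - 1) (Set.Ioi sbar)) ∧
    -- (2) μ₁ is strictly increasing
    StrictMonoOn (fun α => β - sbar + ∫ t in Set.Ioi sbar, (V α t - 1)) (Set.Ioi (0 : ℝ)) ∧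
    -- (3) μ₁(α) → ∞ as α → ∞
    Tendsto (fun α => β - sbar + ∫ t in Set.Ioi sbar, (V α t - 1)) atTop atTop ∧
    -- (4) ω_α(s) = s + μ₁(α) + O(s^{1−ℋ}) as s → ∞
    (∀ α : ℝ, 0 < α → ∃ C S : ℝ, 0 < C ∧ 0 < S ∧ ∀ s : ℝ, S ≤ s →
      |(β + ∫ t in sbar..s, V α t) -
          (s + (β - sbar + ∫ t in Set.Ioi sbar, (V α t - 1)))| ≤
        C * s ^ (1 - calH k l H h)) :=
  mu_one_properties_general k l hlk H h hh hHh hsub β sbar hsbar V hV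
end

section
/- Let n ≥ 1, let 1 ≤ l ≤ k ≤ n be integers, and let a = (a_1,…,a_n) ∈ ℝⁿ with a_i > 0 for all i. Then for every index 1 ≤ i ≤ n: σ_l(a) · σ_{k−1;i}(a) ≥ σ_{l−1;i}(a) · σ_k(a). -/
open scoped BigOperators
open Filter MeasureTheory Set

/-!
Write `a'` for `a` with the entry `a_i` deleted. Then `σ_{j;i}(a) = σ_j(a')` and
`σ_j(a) = σ_j(a') + a_i σ_{j-1}(a')`, and after expanding, the terms carrying `a_i` cancel: the
claim becomes `σ_{l-1}(a') σ_k(a') ≤ σ_l(a') σ_{k-1}(a')`. This monotonicity of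
`σ_{j+1}/σ_j` holds for every tuple of nonnegative numbers, by induction on its length.
-/

namespace Multiset

variable {R : Type*}

theorem esymm_cons_succ [CommSemiring R] (x : R) (s : Multiset R) (j : ℕ) :
    (x ::ₘ s).esymm (j + 1) = s.esymm (j + 1) + x * s.esymm j := by
  simp only [esymm, powersetCard_cons, map_add, sum_add, map_map, Function.comp_def, prod_cons,
    sum_map_mul_left]

@[simp]
theorem esymm_zero [CommSemiring R] (s : Multiset R) : s.esymm 0 = 1 := by
  simp [esymm]

theorem esymm_zero_cons [CommSemiring R] (s : Multiset R) (j : ℕ) :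
    (0 ::ₘ s).esymm j = s.esymm j := by
  cases j with
  | zero => rw [esymm_zero, esymm_zero]
  | succ j => rw [esymm_cons_succ, zero_mul, add_zero]

theorem esymm_nonneg [CommSemiring R] [PartialOrder R] [IsOrderedRing R] {s : Multiset R}
    (hs : ∀ x ∈ s, 0 ≤ x) (j : ℕ) : 0 ≤ s.esymm j :=
  sum_nonneg <| forall_mem_map_iff.mpr fun _ ht =>
    prod_nonneg fun x hx => hs x (subset_of_le (mem_powersetCard.mp ht).1 hx)

variable [CommRing R] [LinearOrder R] [IsStrictOrderedRing R]

/-- Since `σ_j(x ::ₘ s) = σ_j(s) + x σ_{j-1}(s)`, the difference of the two sides is a polynomial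
in `x ≥ 0` whose coefficients are nonnegative by `hmono`; the middle one chains two instances. -/
theorem esymm_mul_esymm_succ_le_cons {s : Multiset R} (hs : ∀ y ∈ s, 0 ≤ y)
    (hmono : ∀ l k, l ≤ k → s.esymm l * s.esymm (k + 1) ≤ s.esymm (l + 1) * s.esymm k)
    {x : R} (hx : 0 ≤ x) {l k : ℕ} (hlk : l ≤ k) :
    (x ::ₘ s).esymm l * (x ::ₘ s).esymm (k + 1) ≤
      (x ::ₘ s).esymm (l + 1) * (x ::ₘ s).esymm k := by
  have hE := esymm_nonneg hs
  rcases hlk.eq_or_lt with rfl | hlk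
  · rw [mul_comm]
  obtain ⟨p, rfl⟩ : ∃ p, k = p + 1 := ⟨k - 1, by omega⟩
  cases l with
  | zero =>
    have h := hmono 0 (p + 1) (by omega)
    simp only [esymm_cons_succ, esymm_zero, one_mul, zero_add] at h ⊢
    nlinarith [mul_nonneg (mul_nonneg hx (hE 1)) (hE p), mul_nonneg (mul_nonneg hx hx) (hE p)]
  | succ m =>
    have hfar : s.esymm m * s.esymm (p + 2) ≤ s.esymm (m + 2) * s.esymm p :=
      (hmono m (p + 1) (by omega)).trans (hmono (m + 1) p (by omega))
    have h₁ := hmono (m + 1) (p + 1) (by omega)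
    have h₀ := hmono m p (by omega)
    simp only [esymm_cons_succ]
    nlinarith [mul_le_mul_of_nonneg_left hfar hx,
      mul_le_mul_of_nonneg_left h₀ (mul_nonneg hx hx)]

/-- A Newton-type inequality: for nonnegative entries, `σ_{j+1}/σ_j` is nonincreasing in `j`. -/
theorem esymm_mul_esymm_succ_le {s : Multiset R} (hs : ∀ x ∈ s, 0 ≤ x) {l k : ℕ}
    (hlk : l ≤ k) : s.esymm l * s.esymm (k + 1) ≤ s.esymm (l + 1) * s.esymm k := by
  induction s using Multiset.induction_on generalizing l k with
  | empty =>
    simp [esymm, powersetCard_zero_right]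
  | cons x s ih =>
    have hs' : ∀ y ∈ s, 0 ≤ y := fun y hy => hs y (mem_cons_of_mem hy)
    exact esymm_mul_esymm_succ_le_cons hs' (fun _ _ => ih hs') (hs x (mem_cons_self x s)) hlk

end Multiset

theorem esym_eq_esymm (n k : ℕ) (a : Fin n → ℝ) :
    esym n k a = (Finset.univ.val.map a).esymm k :=
  (Finset.esymm_map_val a _ k).symm

theorem Finset.univ_val_map_update {ι β : Type*} [Fintype ι] [DecidableEq ι] (a : ι → β) (i : ι)
    (x : β) :
    Finset.univ.val.map (Function.update a i x) =
      x ::ₘ (Finset.univ.erase i).val.map a := by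
  rw [← Finset.insert_erase (Finset.mem_univ i),
    Finset.insert_val_of_notMem (Finset.notMem_erase i _), Multiset.map_cons,
    Function.update_self, Finset.erase_insert (Finset.notMem_erase i _)]
  exact congrArg _ (Multiset.map_congr rfl fun j hj =>
    Function.update_of_ne (Finset.ne_of_mem_erase (Finset.mem_def.mpr hj)) x a)

theorem sigma_quotient_inequality_general
    (n : ℕ) (k l : ℕ) (hl1 : 1 ≤ l) (hlk : l ≤ k)
    (a : Fin n → ℝ) (ha : ∀ i, 0 < a i) (i : Fin n) :
    esymDel n (l - 1) a i * esym n k a ≤ esym n l a * esymDel n (k - 1) a i := by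
  obtain ⟨l, rfl⟩ : ∃ l', l = l' + 1 := ⟨l - 1, by omega⟩
  obtain ⟨k, rfl⟩ : ∃ k', k = k' + 1 := ⟨k - 1, by omega⟩
  set s := (Finset.univ.erase i).val.map a
  have hs : ∀ x ∈ s, 0 ≤ x := Multiset.forall_mem_map_iff.mpr fun j _ => (ha j).le
  have hdel (j : ℕ) : esymDel n j a i = s.esymm j := by
    rw [esymDel, esym_eq_esymm, Finset.univ_val_map_update, Multiset.esymm_zero_cons]
  have hfull (j : ℕ) : esym n (j + 1) a = s.esymm (j + 1) + a i * s.esymm j := by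
    rw [esym_eq_esymm, ← Function.update_eq_self i a, Finset.univ_val_map_update,
      Multiset.esymm_cons_succ, Function.update_eq_self]
  simp only [Nat.add_sub_cancel, hdel, hfull]
  linear_combination Multiset.esymm_mul_esymm_succ_le hs (by omega : l ≤ k)

/-- Newton-type inequality (2.3): `σ_l(a) σ_{k−1;i}(a) ≥ σ_{l−1;i}(a) σ_k(a)`. -/
theorem sigma_quotient_inequality
    (n : ℕ) (hn : 1 ≤ n) (k l : ℕ) (hl1 : 1 ≤ l) (hlk : l ≤ k) (hkn : k ≤ n)
    (a : Fin n → ℝ) (ha : ∀ i, 0 < a i) (i : Fin n) :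
    esymDel n (l - 1) a i * esym n k a ≤ esym n l a * esymDel n (k - 1) a i :=
  sigma_quotient_inequality_general n k l hl1 hlk a ha i
end
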